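/- arXiv:1706.06665 — 10 statements merged into one kernel-verified Lean document; each statement's English description precedes it below -/
import Mathlib

section
/- Let z ∈ F_ℤ and i ∈ ℤ, and let s = s_i = (i, i+1). Then: ℓ̂_FPF(s z s) = ℓ̂_FPF(z) − 1 if z(i) > z(i+1) and z(i) ≠ i+1; ℓ̂_FPF(s z s) = ℓ̂_FPF(z) if z(i) = i+1; and ℓ̂_FPF(s z s) = ℓ̂_FPF(z) + 1 if z(i) < z(i+1). -/
open Equiv

noncomputable section

/-- The function underlying the permutation `Θ : i ↦ i - (-1)^i` of `ℤ`. -/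
def thetaFun (i : ℤ) : ℤ := if Even i then i - 1 else i + 1

theorem thetaFun_invol : Function.Involutive thetaFun := by
  intro i
  unfold thetaFun
  by_cases h : Even i
  · have h1 : ¬ Even (i - 1) := by simp [Int.even_sub_one, h]
    simp [h, h1]
  · have h1 : Even (i + 1) := Int.even_add_one.mpr h
    simp [h, h1]

/-- The permutation `Θ` of `ℤ`, interchanging `2k-1` and `2k` for every integer `k`. -/
def Theta : Equiv.Perm ℤ := thetaFun_invol.toPerm

/-- `F_ℤ`: the fixed-point-free involutions of `ℤ` agreeing with `Θ` outside a finite set. -/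
def FZ : Set (Equiv.Perm ℤ) :=
  {z | z * z = 1 ∧ (∀ i : ℤ, z i ≠ i) ∧ {i : ℤ | z i ≠ Theta i}.Finite}

/-- The set of inversions `Inv(w) = {(i,j) : i < j, w(i) > w(j)}`. -/
def InvSet (w : Equiv.Perm ℤ) : Set (ℤ × ℤ) := {p | p.1 < p.2 ∧ w p.2 < w p.1}

/-- `Cyc_ℤ(w) = {(i,j) : i < j, w(i) = j}`. -/
def CycSet (w : Equiv.Perm ℤ) : Set (ℤ × ℤ) := {p | p.1 < p.2 ∧ w p.1 = p.2}

/-- `ℓ̂_FPF(w) = |Inv(w) ∖ Cyc_ℤ(w)| / 2`. -/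
def fpfLen (w : Equiv.Perm ℤ) : ℕ := ((InvSet w) \ (CycSet w)).ncard / 2

-- ### auxiliary work

lemma mem_D (w : Equiv.Perm ℤ) (p : ℤ × ℤ) :
    p ∈ InvSet w \ CycSet w ↔ p.1 < p.2 ∧ w p.2 < w p.1 ∧ w p.1 ≠ p.2 := by
  simp only [InvSet, CycSet, Set.mem_diff, Set.mem_setOf_eq]
  tauto

lemma swap_lt (i x y : ℤ) :
    swap i (i+1) x < swap i (i+1) y ↔ ((x < y ∧ ¬(x = i ∧ y = i+1)) ∨ (x = i+1 ∧ y = i)) := by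
  simp only [Equiv.swap_apply_def]
  split_ifs <;> omega

lemma theta_bound (x : ℤ) : x - 1 ≤ Theta x ∧ Theta x ≤ x + 1 := by
  have : Theta x = thetaFun x := congrFun (Function.Involutive.coe_toPerm _) x
  rw [this]
  unfold thetaFun
  split_ifs <;> omega

def fmap (i : ℤ) (p : ℤ × ℤ) : ℤ × ℤ :=
  if p = (i, i+1) ∨ p = (i+1, i) then p else (swap i (i+1) p.1, swap i (i+1) p.2)

lemma fmap_eq (i : ℤ) (p : ℤ × ℤ) (h1 : p ≠ (i, i+1)) (h2 : p ≠ (i+1, i)) :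
    fmap i p = (swap i (i+1) p.1, swap i (i+1) p.2) := by
  unfold fmap; rw [if_neg]; push_neg; exact ⟨h1, h2⟩

lemma fmap_invol (i : ℤ) : Function.Involutive (fmap i) := by
  intro p
  by_cases h : p = (i, i+1) ∨ p = (i+1, i)
  · unfold fmap; rw [if_pos h, if_pos h]
  · push_neg at h
    rw [fmap_eq i p h.1 h.2]
    have h1' : (swap i (i+1) p.1, swap i (i+1) p.2) ≠ (i, i+1) := by
      intro he
      apply h.2
      have e1 : swap i (i+1) p.1 = swap i (i+1) (i+1) := by
        rw [Equiv.swap_apply_right]; exact congrArg Prod.fst he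
      have e2 : swap i (i+1) p.2 = swap i (i+1) i := by
        rw [Equiv.swap_apply_left]; exact congrArg Prod.snd he
      exact Prod.ext ((Equiv.swap i (i+1)).injective e1) ((Equiv.swap i (i+1)).injective e2)
    have h2' : (swap i (i+1) p.1, swap i (i+1) p.2) ≠ (i+1, i) := by
      intro he
      apply h.1
      have e1 : swap i (i+1) p.1 = swap i (i+1) i := by
        rw [Equiv.swap_apply_left]; exact congrArg Prod.fst he
      have e2 : swap i (i+1) p.2 = swap i (i+1) (i+1) := by
        rw [Equiv.swap_apply_right]; exact congrArg Prod.snd he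
      exact Prod.ext ((Equiv.swap i (i+1)).injective e1) ((Equiv.swap i (i+1)).injective e2)
    rw [fmap_eq i _ h1' h2']
    simp [Equiv.swap_apply_self]

lemma transfer (z : Equiv.Perm ℤ) (hzz : ∀ x, z (z x) = x) (i : ℤ)
    (p : ℤ × ℤ) (hp1 : p ≠ (i, i+1)) (hp2 : p ≠ (i+1, i))
    (hp3 : fmap i p ≠ (z i, z (i+1))) (hp4 : fmap i p ≠ (z (i+1), z i)) :
    p ∈ InvSet (swap i (i+1) * z * swap i (i+1)) \ CycSet (swap i (i+1) * z * swap i (i+1)) ↔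
      fmap i p ∈ InvSet z \ CycSet z := by
  obtain ⟨a, b⟩ := p
  rw [fmap_eq i (a, b) hp1 hp2] at *
  set s := swap i (i+1) with hs
  rw [mem_D, mem_D]
  simp only [Perm.mul_apply]
  have key1 : a < b ↔ s a < s b := by
    rw [hs, swap_lt]
    constructor
    · intro h
      left
      refine ⟨h, ?_⟩
      rintro ⟨rfl, rfl⟩
      exact hp1 rfl
    · rintro (⟨h, -⟩ | ⟨rfl, rfl⟩)
      · exact h
      · exact absurd rfl hp2
  have key2 : z (s b) < z (s a) ↔ s (z (s b)) < s (z (s a)) := by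
    rw [hs, swap_lt]
    constructor
    · intro h
      left
      refine ⟨h, ?_⟩
      rintro ⟨e1, e2⟩
      apply hp4
      have : s b = z i := by rw [← e1, hzz]
      have h2 : s a = z (i+1) := by rw [← e2, hzz]
      exact Prod.ext h2 this
    · rintro (⟨h, -⟩ | ⟨e1, e2⟩)
      · exact h
      · exfalso
        apply hp3
        have : s b = z (i+1) := by rw [← e1, hzz]
        have h2 : s a = z i := by rw [← e2, hzz]
        exact Prod.ext h2 this
  have key3 : s (z (s a)) = b ↔ z (s a) = s b := by
    constructor
    · intro h
      rw [← h, hs, Equiv.swap_apply_self]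
    · intro h
      rw [h, hs, Equiv.swap_apply_self]
  constructor
  · rintro ⟨h1, h2, h3⟩
    exact ⟨key1.mp h1, key2.mpr h2, fun he => h3 (key3.mpr he)⟩
  · rintro ⟨h1, h2, h3⟩
    exact ⟨key1.mpr h1, key2.mp h2, fun he => h3 (key3.mp he)⟩

end

noncomputable section
open Equiv

lemma zz_of_mem (z : Equiv.Perm ℤ) (h : z * z = 1) : ∀ x, z (z x) = x := by
  intro x
  have := DFunLike.congr_fun h x
  simpa [Perm.mul_apply] using this

lemma outside (z : Equiv.Perm ℤ) (hzz : ∀ x, z (z x) = x) (a b : ℤ)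
    (ha : z a = Theta a) (hb : z b = Theta b) (hab : a < b) (hinv : z b < z a) :
    z a = b := by
  have ba := theta_bound a
  have bb := theta_bound b
  rw [← ha] at ba
  rw [← hb] at bb
  have hba : z b = a := by omega
  rw [← hba, hzz]

lemma D_finite (z : Equiv.Perm ℤ) (hz : z ∈ FZ) : (InvSet z \ CycSet z).Finite := by
  obtain ⟨hz1, hz2, hz3⟩ := hz
  have hzz := zz_of_mem z hz1
  set S := {x : ℤ | z x ≠ Theta x} with hS
  have hT : (S ∪ z '' S).Finite := hz3.union (hz3.image z)
  obtain ⟨u, hu⟩ := hT.bddAbove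
  obtain ⟨l, hl⟩ := hT.bddBelow
  apply Set.Finite.subset ((Set.finite_Icc (l-2) (u+2)).prod (Set.finite_Icc (l-2) (u+2)))
  rintro ⟨a, b⟩ hp
  rw [mem_D] at hp
  dsimp only at hp
  obtain ⟨h1, h2, h3⟩ := hp
  simp only [Set.mem_prod, Set.mem_Icc]
  have hmemS : ∀ x : ℤ, x ∈ S ∨ z x = Theta x := by
    intro x
    by_cases h : z x = Theta x
    · right; exact h
    · left; exact h
  have hub : ∀ x : ℤ, x ∈ S ∪ z '' S → l ≤ x ∧ x ≤ u := fun x hx => ⟨hl hx, hu hx⟩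
  have hzS : ∀ x : ℤ, x ∈ S → l ≤ z x ∧ z x ≤ u := by
    intro x hx
    exact hub (z x) (Or.inr ⟨x, hx, rfl⟩)
  have hSb : ∀ x : ℤ, x ∈ S → l ≤ x ∧ x ≤ u := fun x hx => hub x (Or.inl hx)
  -- b ≤ u + 2
  have hb2 : b ≤ u + 2 := by
    by_contra hc
    push_neg at hc
    have hbS : b ∉ S := fun h => by have := (hSb b h).2; omega
    have hbT : z b = Theta b := by rcases hmemS b with h | h; exact absurd h hbS; exact h
    have bb := theta_bound b
    rw [← hbT] at bb
    have haS : a ∉ S := by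
      intro h
      have := (hzS a h).2
      omega
    have haT : z a = Theta a := by rcases hmemS a with h | h; exact absurd h haS; exact h
    exact h3 (outside z hzz a b haT hbT h1 h2)
  have ha2 : l - 2 ≤ a := by
    by_contra hc
    push_neg at hc
    have haS : a ∉ S := fun h => by have := (hSb a h).1; omega
    have haT : z a = Theta a := by rcases hmemS a with h | h; exact absurd h haS; exact h
    have ba := theta_bound a
    rw [← haT] at ba
    have hbS : b ∉ S := by
      intro h
      have := (hzS b h).1
      omega
    have hbT : z b = Theta b := by rcases hmemS b with h | h; exact absurd h hbS; exact h
    exact h3 (outside z hzz a b haT hbT h1 h2)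
  exact ⟨⟨by omega, by omega⟩, ⟨by omega, by omega⟩⟩

lemma conj_mem_FZ (z : Equiv.Perm ℤ) (hz : z ∈ FZ) (i : ℤ) :
    (swap i (i+1) * z * swap i (i+1)) ∈ FZ := by
  obtain ⟨hz1, hz2, hz3⟩ := hz
  have hzz := zz_of_mem z hz1
  set s := swap i (i+1) with hs
  refine ⟨?_, ?_, ?_⟩
  · ext x
    simp [Perm.mul_apply, hs, Equiv.swap_apply_self, hzz]
  · intro x h
    simp only [Perm.mul_apply] at h
    have : z (s x) = s x := by
      have := congrArg s h
      rwa [hs, Equiv.swap_apply_self] at this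
    exact hz2 (s x) this
  · apply Set.Finite.subset (hz3.union (Set.toFinite {i, i+1, z i, z (i+1)}))
    intro x hx
    simp only [Set.mem_setOf_eq, Perm.mul_apply] at hx
    by_contra hc
    simp only [Set.mem_union, Set.mem_setOf_eq, Set.mem_insert_iff,
      Set.mem_singleton_iff, not_or] at hc
    obtain ⟨hc1, hc2, hc3, hc4, hc5⟩ := hc
    push_neg at hc1
    have hsx : s x = x := by
      rw [hs]
      exact Equiv.swap_apply_of_ne_of_ne hc2 hc3
    have hzx1 : z x ≠ i := by
      intro h
      apply hc4
      rw [← h, hzz]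
    have hzx2 : z x ≠ i + 1 := by
      intro h
      apply hc5
      rw [← h, hzz]
    rw [hsx] at hx
    rw [hs] at hx
    rw [Equiv.swap_apply_of_ne_of_ne hzx1 hzx2] at hx
    exact hx hc1

lemma case2_eq (z : Equiv.Perm ℤ) (hzz : ∀ x, z (z x) = x) (i : ℤ) (h : z i = i + 1) :
    swap i (i+1) * z * swap i (i+1) = z := by
  have hzi1 : z (i+1) = i := by rw [← h, hzz]
  ext x
  simp only [Perm.mul_apply]
  by_cases h1 : x = i
  · subst h1
    rw [Equiv.swap_apply_left, hzi1, h, Equiv.swap_apply_left]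
  by_cases h2 : x = i + 1
  · subst h2
    rw [Equiv.swap_apply_right, h, hzi1, Equiv.swap_apply_right]
  · rw [Equiv.swap_apply_of_ne_of_ne h1 h2]
    have g1 : z x ≠ i := fun he => h2 (by rw [← hzz x, he, h])
    have g2 : z x ≠ i + 1 := fun he => h1 (by rw [← hzz x, he, hzi1])
    rw [Equiv.swap_apply_of_ne_of_ne g1 g2]

end

noncomputable section
open Equiv

lemma case3 (z : Equiv.Perm ℤ) (hz : z ∈ FZ) (i : ℤ) (hlt : z i < z (i+1)) :
    fpfLen (swap i (i+1) * z * swap i (i+1)) = fpfLen z + 1 := by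
  obtain ⟨hz1, hz2, hz3⟩ := hz
  have hzz := zz_of_mem z hz1
  set s := swap i (i+1) with hs
  have h1 : z i ≠ i := hz2 i
  have h2 : z (i+1) ≠ i + 1 := hz2 (i+1)
  have hne : z i ≠ i + 1 := by
    intro h
    have := congrArg z h
    rw [hzz] at this
    omega
  have h3 : z (i+1) ≠ i := by
    intro h
    have := congrArg z h
    rw [hzz] at this
    exact hne this.symm
  have e1 : s (z i) = z i := Equiv.swap_apply_of_ne_of_ne h1 hne
  have e2 : s (z (i+1)) = z (i+1) := Equiv.swap_apply_of_ne_of_ne h3 h2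
  have c1 : (s * z * s) i = z (i+1) := by
    simp only [Perm.mul_apply, hs, Equiv.swap_apply_left]
    exact Equiv.swap_apply_of_ne_of_ne h3 h2
  have c2 : (s * z * s) (i+1) = z i := by
    simp only [Perm.mul_apply, hs, Equiv.swap_apply_right]
    exact Equiv.swap_apply_of_ne_of_ne h1 hne
  have c3 : (s * z * s) (z i) = i + 1 := by
    simp only [Perm.mul_apply, hs]
    rw [← hs, e1, hzz, hs, Equiv.swap_apply_left]
  have c4 : (s * z * s) (z (i+1)) = i := by
    simp only [Perm.mul_apply, hs]
    rw [← hs, e2, hzz, hs, Equiv.swap_apply_right]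
  have p0mem : ((i, i+1) : ℤ × ℤ) ∈ InvSet (s*z*s) \ CycSet (s*z*s) := by
    rw [mem_D]
    dsimp only
    rw [c1, c2]
    exact ⟨by omega, hlt, h2⟩
  have q0mem : ((z i, z (i+1)) : ℤ × ℤ) ∈ InvSet (s*z*s) \ CycSet (s*z*s) := by
    rw [mem_D]
    dsimp only
    rw [c3, c4]
    exact ⟨hlt, by omega, Ne.symm h2⟩
  have p0not : ((i, i+1) : ℤ × ℤ) ∉ InvSet z \ CycSet z := by
    rw [mem_D]
    dsimp only
    rintro ⟨-, h, -⟩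
    omega
  have q0not : ((z i, z (i+1)) : ℤ × ℤ) ∉ InvSet z \ CycSet z := by
    rw [mem_D]
    dsimp only
    rw [hzz, hzz]
    rintro ⟨-, h, -⟩
    omega
  have ffp0 : fmap i (i, i+1) = (i, i+1) := by
    unfold fmap
    rw [if_pos (Or.inl rfl)]
  have ffq0 : fmap i (z i, z (i+1)) = (z i, z (i+1)) := by
    rw [fmap_eq i _ (fun he => h1 (congrArg Prod.fst he)) (fun he => hne (congrArg Prod.fst he))]
    dsimp only
    rw [← hs, e1, e2]
  have sortf : ∀ p : ℤ × ℤ, p.1 < p.2 → p ≠ (i, i+1) → (fmap i p).1 < (fmap i p).2 := by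
    intro p hlt' hne'
    have hne2 : p ≠ (i+1, i) := by
      intro he
      subst he
      dsimp only at hlt'
      omega
    rw [fmap_eq i p hne' hne2]
    dsimp only
    rw [← hs, hs, swap_lt]
    left
    exact ⟨hlt', fun ⟨ha, hb⟩ => hne' (Prod.ext ha hb)⟩
  have key : InvSet (s*z*s) \ CycSet (s*z*s) =
      fmap i '' (InvSet z \ CycSet z) ∪ {(i, i+1), (z i, z (i+1))} := by
    ext p
    constructor
    · intro hp
      by_cases cc1 : p = (i, i+1)
      · exact Set.mem_union_right _ (by rw [cc1]; exact Set.mem_insert _ _)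
      by_cases cc2 : p = (z i, z (i+1))
      · exact Set.mem_union_right _ (by rw [cc2]; exact Set.mem_insert_of_mem _ rfl)
      left
      have hps : p.1 < p.2 := ((mem_D _ p).mp hp).1
      have hc2' : p ≠ (i+1, i) := by
        intro he
        subst he
        dsimp only at hps
        omega
      have hp3 : fmap i p ≠ (z i, z (i+1)) := by
        intro he
        apply cc2
        have := congrArg (fmap i) he
        rw [fmap_invol i p, ffq0] at this
        exact this
      have hp4 : fmap i p ≠ (z (i+1), z i) := by
        intro he
        have hsort := sortf p hps cc1
        rw [he] at hsort
        dsimp only at hsort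
        omega
      exact ⟨fmap i p, (transfer z hzz i p cc1 hc2' hp3 hp4).mp hp, fmap_invol i p⟩
    · intro hp
      rcases hp with ⟨q, hq, rfl⟩ | hp
      · have hqs : q.1 < q.2 := ((mem_D z q).mp hq).1
        have hq1 : q ≠ (i, i+1) := fun he => p0not (he ▸ hq)
        have hq3 : q ≠ (z i, z (i+1)) := fun he => q0not (he ▸ hq)
        have hfq1 : fmap i q ≠ (i, i+1) := by
          intro he
          apply hq1
          rw [← fmap_invol i q, he, ffp0]
        have hfqs : (fmap i q).1 < (fmap i q).2 := sortf q hqs hq1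
        have hfq2 : fmap i q ≠ (i+1, i) := by
          intro he
          rw [he] at hfqs
          dsimp only at hfqs
          omega
        have hfq3 : fmap i (fmap i q) ≠ (z i, z (i+1)) := by
          rw [fmap_invol i q]; exact hq3
        have hfq4 : fmap i (fmap i q) ≠ (z (i+1), z i) := by
          rw [fmap_invol i q]
          intro he
          subst he
          dsimp only at hqs
          omega
        exact (transfer z hzz i (fmap i q) hfq1 hfq2 hfq3 hfq4).mpr
          (by rw [fmap_invol i q]; exact hq)
      · rcases hp with rfl | hp
        · exact p0mem
        · rw [Set.mem_singleton_iff] at hp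
          subst hp
          exact q0mem
  have hDfin : (InvSet z \ CycSet z).Finite := D_finite z ⟨hz1, hz2, hz3⟩
  have himgfin : (fmap i '' (InvSet z \ CycSet z)).Finite := hDfin.image _
  have hpairfin : ({(i, i+1), (z i, z (i+1))} : Set (ℤ × ℤ)).Finite := Set.toFinite _
  have hdisj : Disjoint (fmap i '' (InvSet z \ CycSet z))
      ({(i, i+1), (z i, z (i+1))} : Set (ℤ × ℤ)) := by
    rw [Set.disjoint_right]
    intro a ha
    rcases ha with rfl | ha
    · rintro ⟨q, hq, hfq⟩
      apply p0not
      have : q = fmap i (i, i+1) := by rw [← hfq, fmap_invol]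
      rw [ffp0] at this
      rwa [this] at hq
    · rw [Set.mem_singleton_iff] at ha
      subst ha
      rintro ⟨q, hq, hfq⟩
      apply q0not
      have : q = fmap i (z i, z (i+1)) := by rw [← hfq, fmap_invol]
      rw [ffq0] at this
      rwa [this] at hq
  have hcard : (InvSet (s*z*s) \ CycSet (s*z*s)).ncard = (InvSet z \ CycSet z).ncard + 2 := by
    rw [key, Set.ncard_union_eq hdisj himgfin hpairfin,
      Set.ncard_image_of_injective _ (fmap_invol i).injective,
      Set.ncard_pair (fun he => h1 (congrArg Prod.fst he).symm)]
  unfold fpfLen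
  rw [hcard]
  omega

/-- the effect of conjugating `z ∈ F_ℤ` by `s = s_i` on `ℓ̂_FPF`. -/
theorem fpfLen_conj_swap (z : Equiv.Perm ℤ) (hz : z ∈ FZ) (i : ℤ)
    (s : Equiv.Perm ℤ) (hs : s = Equiv.swap i (i + 1)) :
    (z (i + 1) < z i ∧ z i ≠ i + 1 → fpfLen (s * z * s) + 1 = fpfLen z) ∧
    (z i = i + 1 → fpfLen (s * z * s) = fpfLen z) ∧
    (z i < z (i + 1) → fpfLen (s * z * s) = fpfLen z + 1) := by
  subst hs
  have hzz := zz_of_mem z hz.1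
  have h1 : z i ≠ i := hz.2.1 i
  have h2 : z (i+1) ≠ i + 1 := hz.2.1 (i+1)
  refine ⟨?_, ?_, ?_⟩
  · rintro ⟨hgt, hne⟩
    have h3 : z (i+1) ≠ i := by
      intro h
      have := congrArg z h
      rw [hzz] at this
      exact hne this.symm
    have hz' := conj_mem_FZ z hz i
    set z' := Equiv.swap i (i+1) * z * Equiv.swap i (i+1) with hz'def
    have c1 : z' i = z (i+1) := by
      simp only [hz'def, Perm.mul_apply, Equiv.swap_apply_left]
      exact Equiv.swap_apply_of_ne_of_ne h3 h2
    have c2 : z' (i+1) = z i := by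
      simp only [hz'def, Perm.mul_apply, Equiv.swap_apply_right]
      exact Equiv.swap_apply_of_ne_of_ne h1 hne
    have hlt' : z' i < z' (i+1) := by rw [c1, c2]; exact hgt
    have hmain := case3 z' hz' i hlt'
    have hss : Equiv.swap i (i+1) * z' * Equiv.swap i (i+1) = z := by
      ext x
      simp [hz'def, Perm.mul_apply, Equiv.swap_apply_self]
    rw [hss] at hmain
    exact hmain.symm
  · intro h
    rw [case2_eq z hzz i h]
  · intro hlt
    exact case3 z hz i hlt

end
end

section
/- Let z ∈ F_∞. Then the set of FPF-visible inversions of z is exactly Inv(β_min(z)), the set of inversions of the lexicographically minimal minimal-length permutation β_min(z) conjugating Θ to z. -/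
/-!
The candidate `β_min(z)` sends the `k`-th cycle of `z` (cycles ordered by their minima) to
`{2k - 1, 2k}`. Comparing two of its values amounts to comparing cycle minima, which makes its
inversions exactly the visible ones. Any `u ∈ A_FPF(z)` increases on every cycle, since otherwise
swapping two adjacent values would shorten it; for such `u` the visible inversions inject into
`Inv(u)`, so `β_min(z)` has minimal length. Among permutations increasing on cycles, `β_min(z)`
is lexicographically smallest, because each cycle minimum in turn receives the smallest odd value
still free.
-/

open Equiv

noncomputable section

/-- `(i,j)` is an FPF-visible inversion of `z`: `i < j` and `z(j) < min{i, z(i)}`. -/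
def FpfVisInv (z : Equiv.Perm ℤ) (i j : ℤ) : Prop := i < j ∧ z j < min i (z i)

/-- `i` is an FPF-visible descent of `z`. -/
def FpfVisDes (z : Equiv.Perm ℤ) (i : ℤ) : Prop := FpfVisInv z i (i + 1)

/-- `i` is a visible descent of an involution `f` of `ℤ`: `f(i+1) ≤ min{i, f(i)}`. -/
def VisDes (f : ℤ → ℤ) (i : ℤ) : Prop := f (i + 1) ≤ min i (f i)

/-- `(q,r)` is the lexicographically maximal FPF-visible inversion of `z`. -/
def IsMaxVisInv (z : Equiv.Perm ℤ) (q r : ℤ) : Prop :=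
  FpfVisInv z q r ∧ ∀ a b : ℤ, FpfVisInv z a b → a < q ∨ (a = q ∧ b ≤ r)

/-- `S_∞`: permutations of `ℤ` whose support is a finite set of positive integers. -/
def SInf : Set (Equiv.Perm ℤ) := {w | {i : ℤ | w i ≠ i}.Finite ∧ ∀ i : ℤ, w i ≠ i → 0 < i}

/-- The Coxeter length of `w ∈ S_∞`: the number of inversions. -/
def lenZ (w : Equiv.Perm ℤ) : ℕ := (InvSet w).ncard

/-- `F_∞`: the elements of `F_ℤ` agreeing with `Θ` on all `i ≤ 0`. -/
def FInf : Set (Equiv.Perm ℤ) := {z | z ∈ FZ ∧ ∀ i : ℤ, i ≤ 0 → z i = Theta i}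

/-- `A_FPF(z)`: the elements `w ∈ S_∞` of minimal Coxeter length with `z = w⁻¹ Θ w`. -/
def AFPF (z : Equiv.Perm ℤ) : Set (Equiv.Perm ℤ) :=
  {w | w ∈ SInf ∧ z = w⁻¹ * Theta * w ∧
    ∀ v ∈ SInf, z = v⁻¹ * Theta * v → lenZ w ≤ lenZ v}

/-- `w = β_min(z)`: `w ∈ A_FPF(z)` and the one-line sequence `(w(1), w(2), …)` of `w`
is lexicographically minimal among elements of `A_FPF(z)`. -/
def IsLexMinAtom (z w : Equiv.Perm ℤ) : Prop :=
  w ∈ AFPF z ∧ ∀ v ∈ AFPF z, v = w ∨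
    ∃ k : ℤ, 0 < k ∧ w k < v k ∧ ∀ j : ℤ, 0 < j → j < k → w j = v j

lemma Theta_apply_of_emod_two_eq_zero {i : ℤ} (h : i % 2 = 0) : Theta i = i - 1 :=
  if_pos (Int.even_iff.mpr h)

lemma Theta_apply_of_emod_two_eq_one {i : ℤ} (h : i % 2 = 1) : Theta i = i + 1 :=
  if_neg (by rw [Int.not_even_iff]; exact h)

lemma Theta_apply_cases (i : ℤ) :
    (i % 2 = 0 ∧ Theta i = i - 1) ∨ (i % 2 = 1 ∧ Theta i = i + 1) := by
  rcases Int.emod_two_eq_zero_or_one i with h | h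
  · exact .inl ⟨h, Theta_apply_of_emod_two_eq_zero h⟩
  · exact .inr ⟨h, Theta_apply_of_emod_two_eq_one h⟩

lemma Theta_mul_swap {m : ℤ} (hm : m % 2 = 1) :
    Theta * swap m (m + 1) = swap m (m + 1) * Theta := by
  have hΘ : swap (Theta m) (Theta (m + 1)) = Theta * swap m (m + 1) * Theta⁻¹ :=
    swap_apply_apply Theta m (m + 1)
  rw [Theta_apply_of_emod_two_eq_one hm, Theta_apply_of_emod_two_eq_zero (by omega),
    add_sub_cancel_right, swap_comm, eq_mul_inv_iff_mul_eq] at hΘ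
  exact hΘ.symm

lemma eq_inv_mul_Theta_mul_iff {z v : Perm ℤ} : z = v⁻¹ * Theta * v ↔ v * z = Theta * v := by
  rw [mul_assoc, eq_inv_mul_iff_mul_eq]

lemma Equiv.Perm.apply_mem_of_forall_ne_self {α : Type*} {v : Perm α} {s : Set α}
    (hs : ∀ x, v x ≠ x → x ∈ s) {x : α} (hx : x ∈ s) : v x ∈ s := by
  by_cases h : v x = x
  · rwa [h]
  · exact hs _ (Perm.set_support_apply_mem.mpr h)

lemma Function.Injective.surjective_of_finite_ne_self {α : Type*} {f : α → α}
    (hf : f.Injective) (hfin : {x | f x ≠ x}.Finite) : f.Surjective := by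
  have hmaps : Set.MapsTo f {x | f x ≠ x} {x | f x ≠ x} := fun x hx => hf.ne hx
  have hsurj := ((hfin.injOn_iff_bijOn_of_mapsTo hmaps).mp hf.injOn).surjOn
  intro y
  by_cases hy : f y = y
  · exact ⟨y, hy⟩
  · obtain ⟨x, -, hx⟩ := hsurj hy
    exact ⟨x, hx⟩

lemma invSet_swap_mul {v : Perm ℤ} {a b m : ℤ} (hab : a < b) (ha : v a = m + 1)
    (hb : v b = m) : InvSet (swap m (m + 1) * v) = InvSet v \ {(a, b)} := by
  have hswap : ∀ x,
      swap m (m + 1) (v x) = if x = b then m + 1 else if x = a then m else v x := by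
    intro x
    split_ifs with hxb hxa
    · rw [hxb, hb, swap_apply_left]
    · rw [hxa, ha, swap_apply_right]
    · exact swap_apply_of_ne_of_ne (fun h => hxb (v.injective (h.trans hb.symm)))
        (fun h => hxa (v.injective (h.trans ha.symm)))
  ext ⟨p, q⟩
  have hp : v p = m + 1 ↔ p = a := ⟨fun h => v.injective (h.trans ha.symm), fun h => h ▸ ha⟩
  have hq : v q = m + 1 ↔ q = a := ⟨fun h => v.injective (h.trans ha.symm), fun h => h ▸ ha⟩
  have hp' : v p = m ↔ p = b := ⟨fun h => v.injective (h.trans hb.symm), fun h => h ▸ hb⟩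
  have hq' : v q = m ↔ q = b := ⟨fun h => v.injective (h.trans hb.symm), fun h => h ▸ hb⟩
  simp only [InvSet, Set.mem_ofPred_eq, Set.mem_sdiff, Set.mem_singleton_iff, Perm.mul_apply,
    Prod.mk.injEq, hswap]
  split_ifs <;> omega

namespace SInf

variable {v : Perm ℤ}

lemma one_le_apply (hv : v ∈ SInf) {x : ℤ} (hx : 1 ≤ x) : 1 ≤ v x :=
  Perm.apply_mem_of_forall_ne_self (s := Set.Ici 1) (fun y hy => hv.2 y hy) hx

lemma invSet_finite (hv : v ∈ SInf) : (InvSet v).Finite := by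
  obtain ⟨B, hB⟩ := hv.1.bddAbove
  have hmoved : ∀ x, v x ≠ x → x ∈ Set.Icc 1 B := fun x hx => ⟨hv.2 x hx, hB hx⟩
  have hcases : ∀ x, (x ∈ Set.Icc 1 B ∧ v x ∈ Set.Icc 1 B) ∨ (x ∉ Set.Icc 1 B ∧ v x = x) := by
    intro x
    by_cases hx : x ∈ Set.Icc 1 B
    · exact .inl ⟨hx, Perm.apply_mem_of_forall_ne_self hmoved hx⟩
    · exact .inr ⟨hx, not_not.mp (mt (hmoved x) hx)⟩
  refine ((Set.finite_Icc 1 B).prod (Set.finite_Icc 1 B)).subset ?_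
  rintro ⟨p, q⟩ ⟨hpq, hvpq⟩
  simp only [Set.mem_prod, Set.mem_Icc] at hcases hpq hvpq ⊢
  have := hcases p
  have := hcases q
  omega

lemma swap_mul_mem (hv : v ∈ SInf) {m : ℤ} (hm : 1 ≤ m) : swap m (m + 1) * v ∈ SInf := by
  have hsupp := Perm.set_support_mul_subset (swap m (m + 1)) v
  have hswap : {x | swap m (m + 1) x ≠ x} ⊆ {m, m + 1} := fun x hx =>
    (swap_apply_ne_self_iff.mp hx).2
  refine ⟨((Set.toFinite {m, m + 1}).union hv.1).subset (hsupp.trans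
    (Set.union_subset_union_left _ hswap)), fun x hx => ?_⟩
  rcases hsupp hx with hx | hx
  · rcases hswap hx with rfl | rfl <;> omega
  · exact hv.2 x hx

end SInf

namespace FInf

variable {z : Perm ℤ}

lemma apply_apply (hz : z ∈ FInf) (x : ℤ) : z (z x) = x := by
  simpa using DFunLike.congr_fun hz.1.1 x

lemma apply_ne_self (hz : z ∈ FInf) (x : ℤ) : z x ≠ x := hz.1.2.1 x

lemma apply_of_nonpos (hz : z ∈ FInf) {x : ℤ} (hx : x ≤ 0) : z x = Theta x := hz.2 x hx

lemma one_le_apply (hz : z ∈ FInf) {x : ℤ} (hx : 1 ≤ x) : 1 ≤ z x := by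
  by_contra h
  have h' := apply_of_nonpos hz (x := z x) (by omega)
  rw [apply_apply hz] at h'
  rcases Theta_apply_cases (z x) with ⟨_, _⟩ | ⟨_, _⟩ <;> omega

lemma exists_bound (hz : z ∈ FInf) :
    ∃ N : ℤ, N % 2 = 0 ∧ 0 ≤ N ∧ ∀ i, N < i → z i = Theta i := by
  obtain ⟨B, hB⟩ := hz.1.2.2.bddAbove
  refine ⟨2 * max B 0, by omega, by omega, fun i hi => not_not.mp fun h => ?_⟩
  have := hB h
  omega

lemma apply_le_of_le (hz : z ∈ FInf) {N : ℤ} (hN : N % 2 = 0)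
    (hzN : ∀ i, N < i → z i = Theta i) {x : ℤ} (hx : x ≤ N) : z x ≤ N := by
  by_contra h
  have h' := hzN (z x) (by omega)
  rw [apply_apply hz] at h'
  rcases Theta_apply_cases (z x) with ⟨_, _⟩ | ⟨_, _⟩ <;> omega

lemma one_le_min (hz : z ∈ FInf) {i : ℤ} (hi : 1 ≤ i) : 1 ≤ min i (z i) :=
  le_min hi (one_le_apply hz hi)

lemma min_lt_apply_min (hz : z ∈ FInf) (i : ℤ) : min i (z i) < z (min i (z i)) := by
  have := apply_ne_self hz i
  rcases min_choice i (z i) with h | h <;> rw [h]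
  · omega
  · rw [apply_apply hz]; omega

lemma one_le_of_fpfVisInv (hz : z ∈ FInf) {p q : ℤ} (h : FpfVisInv z p q) : 1 ≤ p := by
  obtain ⟨hpq, hq⟩ := h
  by_contra hp
  by_cases hq1 : 1 ≤ q
  · have := one_le_apply hz hq1
    omega
  · rw [apply_of_nonpos hz (by omega)] at hq
    rcases Theta_apply_cases q with ⟨_, _⟩ | ⟨_, _⟩ <;> omega

end FInf

def cycleMinCount (z : Perm ℤ) (i : ℤ) : ℕ :=
  ((Finset.Icc 1 i).filter fun x => x < z x).card

section cycleMinCount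

variable {z : Perm ℤ}

lemma cycleMinCount_mono {i j : ℤ} (hij : i ≤ j) : cycleMinCount z i ≤ cycleMinCount z j :=
  Finset.card_le_card (Finset.filter_subset_filter _ (Finset.Icc_subset_Icc_right hij))

lemma cycleMinCount_lt {i j : ℤ} (hij : i < j) (hj : 1 ≤ j) (hjz : j < z j) :
    cycleMinCount z i < cycleMinCount z j := by
  refine Finset.card_lt_card ⟨Finset.filter_subset_filter _ (Finset.Icc_subset_Icc_right
    hij.le), fun h => ?_⟩
  have hjmem : j ∈ (Finset.Icc 1 j).filter fun x => x < z x := by simp [hj, hjz]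
  have := Finset.mem_Icc.mp (Finset.mem_filter.mp (h hjmem)).1
  omega

lemma cycleMinCount_lt_iff {i j : ℤ} (hj : 1 ≤ j) (hjz : j < z j) :
    cycleMinCount z i < cycleMinCount z j ↔ i < j :=
  ⟨fun h => lt_of_not_ge fun hji => h.not_ge (cycleMinCount_mono hji),
    fun h => cycleMinCount_lt h hj hjz⟩

lemma eq_of_cycleMinCount_eq {i j : ℤ} (hi : 1 ≤ i) (hiz : i < z i) (hj : 1 ≤ j)
    (hjz : j < z j) (h : cycleMinCount z i = cycleMinCount z j) : i = j :=
  le_antisymm (not_lt.mp fun hji => (cycleMinCount_lt hji hi hiz).ne' h)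
    (not_lt.mp fun hij => (cycleMinCount_lt hij hj hjz).ne h)

lemma one_le_cycleMinCount {i : ℤ} (hi : 1 ≤ i) (hiz : i < z i) : 1 ≤ cycleMinCount z i :=
  (Nat.zero_le _).trans_lt (cycleMinCount_lt (i := 0) (by omega) hi hiz)

lemma cycleMinCount_add_one {i : ℤ} (hi : 0 ≤ i) (h : ¬ i + 1 < z (i + 1)) :
    cycleMinCount z (i + 1) = cycleMinCount z i := by
  rw [cycleMinCount, ← Finset.insert_Icc_right_eq_Icc_add_one (by omega),
    Finset.filter_insert, if_neg h, cycleMinCount]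

/-- The involution `z` pairs the cycle minima in `[1, N]` with the cycle maxima there. -/
lemma two_mul_cycleMinCount (hz : z ∈ FInf) {N : ℤ} (hN : N % 2 = 0) (hN0 : 0 ≤ N)
    (hzN : ∀ i, N < i → z i = Theta i) : 2 * (cycleMinCount z N : ℤ) = N := by
  have hmaps : ∀ x ∈ Finset.Icc 1 N, z x ∈ Finset.Icc 1 N := fun x hx => by
    rw [Finset.mem_Icc] at hx ⊢
    exact ⟨FInf.one_le_apply hz hx.1, FInf.apply_le_of_le hz hN hzN hx.2⟩
  have hmax : ((Finset.Icc 1 N).filter fun x => ¬ x < z x).card = cycleMinCount z N := by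
    refine (Finset.card_nbij' z z ?_ ?_ ?_ ?_).symm
    all_goals intro x hx
    all_goals simp only [Finset.coe_filter, Set.mem_ofPred_eq] at hx ⊢
    · refine ⟨hmaps x hx.1, ?_⟩
      rw [FInf.apply_apply hz]; omega
    · refine ⟨hmaps x hx.1, ?_⟩
      have := FInf.apply_ne_self hz x
      rw [FInf.apply_apply hz]; omega
    · exact FInf.apply_apply hz x
    · exact FInf.apply_apply hz x
  have hsum := Finset.card_filter_add_card_filter_not (s := Finset.Icc 1 N) (fun x => x < z x)
  rw [hmax, Int.card_Icc] at hsum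
  change cycleMinCount z N + cycleMinCount z N = _ at hsum
  omega

end cycleMinCount

/-- The explicit candidate for `β_min(z)`: the smaller and the larger element of the `k`-th cycle
of `z`, cycles ordered by their minima, go to `2k - 1` and `2k`. -/
def betaMin (z : Perm ℤ) (i : ℤ) : ℤ :=
  if i ≤ 0 then i else 2 * cycleMinCount z (min i (z i)) - if i < z i then 1 else 0

section betaMin

variable {z : Perm ℤ}

lemma betaMin_of_nonpos {i : ℤ} (hi : i ≤ 0) : betaMin z i = i := if_pos hi

lemma betaMin_of_pos {i : ℤ} (hi : 1 ≤ i) :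
    betaMin z i = 2 * cycleMinCount z (min i (z i)) - if i < z i then 1 else 0 :=
  if_neg (by omega)

lemma one_le_betaMin (hz : z ∈ FInf) {i : ℤ} (hi : 1 ≤ i) : 1 ≤ betaMin z i := by
  have := one_le_cycleMinCount (FInf.one_le_min hz hi) (FInf.min_lt_apply_min hz i)
  rw [betaMin_of_pos hi]
  split_ifs <;> omega

lemma betaMin_apply (hz : z ∈ FInf) (i : ℤ) : betaMin z (z i) = Theta (betaMin z i) := by
  by_cases hi : i ≤ 0
  · rw [betaMin_of_nonpos hi, FInf.apply_of_nonpos hz hi, betaMin_of_nonpos]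
    rcases Theta_apply_cases i with ⟨_, _⟩ | ⟨_, _⟩ <;> omega
  have hi1 : 1 ≤ i := by omega
  rw [betaMin_of_pos hi1, betaMin_of_pos (FInf.one_le_apply hz hi1), FInf.apply_apply hz,
    min_comm]
  rcases (FInf.apply_ne_self hz i).lt_or_gt with h | h
  · rw [if_neg h.not_gt, if_pos h, Theta_apply_of_emod_two_eq_zero (by omega)]
    ring
  · rw [if_pos h, if_neg h.not_gt, Theta_apply_of_emod_two_eq_one (by omega)]
    ring

lemma betaMin_injective (hz : z ∈ FInf) : Function.Injective (betaMin z) := by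
  have key : ∀ i j, 1 ≤ i → 1 ≤ j → betaMin z i = betaMin z j → i = j := by
    intro i j hi hj h
    rw [betaMin_of_pos hi, betaMin_of_pos hj] at h
    have hcount := eq_of_cycleMinCount_eq (FInf.one_le_min hz hi) (FInf.min_lt_apply_min hz i)
      (FInf.one_le_min hz hj) (FInf.min_lt_apply_min hz j)
    have := FInf.apply_ne_self hz i
    have := FInf.apply_ne_self hz j
    split_ifs at h with hiz hjz hjz
    · have := hcount (by omega)
      omega
    · omega
    · omega
    · have := hcount (by omega)
      exact z.injective (by omega)
  intro i j h
  by_cases hi : i ≤ 0 <;> by_cases hj : j ≤ 0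
  · rwa [betaMin_of_nonpos hi, betaMin_of_nonpos hj] at h
  · have := one_le_betaMin hz (i := j) (by omega)
    rw [betaMin_of_nonpos hi] at h
    omega
  · have := one_le_betaMin hz (i := i) (by omega)
    rw [betaMin_of_nonpos hj] at h
    omega
  · exact key i j (by omega) (by omega) h

lemma betaMin_eq_self_of_lt (hz : z ∈ FInf) {N : ℤ} (hN : N % 2 = 0) (hN0 : 0 ≤ N)
    (hzN : ∀ i, N < i → z i = Theta i) {i : ℤ} (hi : N < i) : betaMin z i = i := by
  have hzi : ∀ j, i ≤ j → z j = Theta j := fun j hj => hzN j (by omega)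
  rw [betaMin_of_pos (by omega)]
  rcases Theta_apply_cases i with ⟨hpar, hΘ⟩ | ⟨hpar, hΘ⟩
  · have hcount := cycleMinCount_add_one (z := z) (i := i - 1) (by omega)
      (by rw [sub_add_cancel, hzi i le_rfl, hΘ]; omega)
    have := two_mul_cycleMinCount hz hpar (by omega) (fun j hj => hzi j hj.le)
    rw [hzi i le_rfl, hΘ, min_eq_right (by omega), if_neg (by omega)]
    rw [sub_add_cancel] at hcount
    omega
  · have hcount := cycleMinCount_add_one (z := z) (i := i) (by omega)
      (by rw [hzi (i + 1) (by omega), Theta_apply_of_emod_two_eq_zero (by omega)]; omega)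
    have := two_mul_cycleMinCount hz (N := i + 1) (by omega) (by omega)
      (fun j hj => hzi j (by omega))
    rw [hzi i le_rfl, hΘ, min_eq_left (by omega), if_pos (by omega)]
    omega

lemma exists_betaMin_ne_self_subset (hz : z ∈ FInf) :
    ∃ N : ℤ, {i | betaMin z i ≠ i} ⊆ Set.Icc 1 N := by
  obtain ⟨N, hN, hN0, hzN⟩ := FInf.exists_bound hz
  refine ⟨N, fun _ hi => ⟨?_, ?_⟩⟩
  · exact not_lt.mp fun h => hi (betaMin_of_nonpos (by omega))
  · exact not_lt.mp fun h => hi (betaMin_eq_self_of_lt hz hN hN0 hzN h)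

lemma betaMin_surjective (hz : z ∈ FInf) : Function.Surjective (betaMin z) :=
  have ⟨N, hN⟩ := exists_betaMin_ne_self_subset hz
  (betaMin_injective hz).surjective_of_finite_ne_self ((Set.finite_Icc 1 N).subset hN)

def betaMinPerm (hz : z ∈ FInf) : Perm ℤ :=
  Equiv.ofBijective (betaMin z) ⟨betaMin_injective hz, betaMin_surjective hz⟩

lemma betaMinPerm_mem_SInf (hz : z ∈ FInf) : betaMinPerm hz ∈ SInf :=
  have ⟨N, hN⟩ := exists_betaMin_ne_self_subset hz
  ⟨(Set.finite_Icc 1 N).subset hN, fun _ hi => (hN hi).1⟩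

lemma betaMinPerm_mul (hz : z ∈ FInf) : betaMinPerm hz * z = Theta * betaMinPerm hz :=
  Perm.ext (betaMin_apply hz)

lemma betaMin_lt_betaMin_iff (hz : z ∈ FInf) {p q : ℤ} (hpq : p < q) :
    betaMin z q < betaMin z p ↔ z q < min p (z p) := by
  by_cases hp : p ≤ 0
  · have hnot : ¬ z q < min p (z p) := fun h => by
      have := FInf.one_le_of_fpfVisInv hz ⟨hpq, h⟩
      omega
    have hq : p < betaMin z q := by
      by_cases hq : q ≤ 0
      · rwa [betaMin_of_nonpos hq]
      · have := one_le_betaMin hz (i := q) (by omega)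
        omega
    rw [betaMin_of_nonpos hp]
    exact iff_of_false hq.not_gt hnot
  have hp1 : 1 ≤ p := by omega
  have hq1 : 1 ≤ q := by omega
  have hcount_qp := cycleMinCount_lt_iff (z := z) (i := min q (z q)) (FInf.one_le_min hz hp1)
    (FInf.min_lt_apply_min hz p)
  have hcount_pq := cycleMinCount_lt_iff (z := z) (i := min p (z p)) (FInf.one_le_min hz hq1)
    (FInf.min_lt_apply_min hz q)
  rw [betaMin_of_pos hp1, betaMin_of_pos hq1]
  -- Equal cycle minima with `p < q` force `p` to be the minimum and `q` the maximum.
  split_ifs <;> omega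

lemma invSet_betaMinPerm (hz : z ∈ FInf) :
    InvSet (betaMinPerm hz) = {p : ℤ × ℤ | FpfVisInv z p.1 p.2} := by
  ext ⟨p, q⟩
  exact and_congr_right (betaMin_lt_betaMin_iff hz)

end betaMin

def IncreasingOnCycles (z v : Perm ℤ) : Prop := ∀ x, 1 ≤ x → x < z x → v x < v (z x)

/-- If `v` decreases on a cycle `{a, z a}`, the values `v (z a) = m` and `v a = m + 1` are adjacent
and form a block of `Θ`, so swapping them keeps `z = v⁻¹ Θ v` and removes one inversion. -/
lemma exists_lenZ_lt {z v : Perm ℤ} (hv : v ∈ SInf) (hvz : v * z = Theta * v) {a : ℤ}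
    (ha : 1 ≤ a) (haz : a < z a) (hva : v (z a) < v a) :
    ∃ u ∈ SInf, u * z = Theta * u ∧ lenZ u < lenZ v := by
  have hΘ : v (z a) = Theta (v a) := DFunLike.congr_fun hvz a
  set m := v (z a) with hm
  obtain ⟨hma, hmodd⟩ : v a = m + 1 ∧ m % 2 = 1 := by
    rcases Theta_apply_cases (v a) with ⟨_, _⟩ | ⟨_, _⟩ <;> omega
  refine ⟨swap m (m + 1) * v, SInf.swap_mul_mem hv (SInf.one_le_apply hv (by omega)), ?_, ?_⟩
  · rw [mul_assoc, hvz, ← mul_assoc, ← Theta_mul_swap hmodd, mul_assoc]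
  · rw [lenZ, lenZ, invSet_swap_mul haz hma hm.symm]
    exact Set.ncard_sdiff_singleton_lt_of_mem ⟨haz, by omega⟩ (SInf.invSet_finite hv)

lemma increasingOnCycles_of_mem_AFPF {z w : Perm ℤ} (hw : w ∈ AFPF z) :
    IncreasingOnCycles z w := by
  intro x hx hxz
  by_contra hlt
  have hne : w (z x) ≠ w x := fun h => hxz.ne' (w.injective h)
  obtain ⟨u, hu, huz, hlen⟩ := exists_lenZ_lt hw.1 (eq_inv_mul_Theta_mul_iff.mp hw.2.1) hx hxz
    (lt_of_le_of_ne (not_lt.mp hlt) hne)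
  exact hlen.not_ge (hw.2.2 u hu (eq_inv_mul_Theta_mul_iff.mpr huz))

/-- For a visible inversion `(p, q)`, the values `u (z q) < u q` are adjacent, so `u p` lies
outside them: either `(p, q)` or `(z q, p)` is an inversion of `u`, and this choice is
injective. -/
lemma ncard_fpfVisInv_le_lenZ {z u : Perm ℤ} (hz : z ∈ FInf) (hu : u ∈ SInf)
    (huz : u * z = Theta * u) (hinc : IncreasingOnCycles z u) :
    {p : ℤ × ℤ | FpfVisInv z p.1 p.2}.ncard ≤ lenZ u := by
  have hadj : ∀ q, 1 ≤ q → z q < q → u q = u (z q) + 1 := by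
    intro q hq hzq
    have hlt := hinc (z q) (FInf.one_le_apply hz hq) (by rwa [FInf.apply_apply hz])
    have hΘ : u (z (z q)) = Theta (u (z q)) := DFunLike.congr_fun huz (z q)
    rw [FInf.apply_apply hz] at hlt hΘ
    rcases Theta_apply_cases (u (z q)) with ⟨_, _⟩ | ⟨_, _⟩ <;> omega
  refine Set.ncard_le_ncard_of_injOn (fun r => if u r.2 < u r.1 then r else (z r.2, r.1))
    ?_ ?_ (SInf.invSet_finite hu)
  · rintro ⟨p, q⟩ hvis
    have hp := FInf.one_le_of_fpfVisInv hz hvis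
    obtain ⟨hpq, hq⟩ := hvis
    dsimp only at hpq hq
    rw [lt_min_iff] at hq
    have := hadj q (by omega) (by omega)
    have hne : u p ≠ u q := fun h => hpq.ne (u.injective h)
    have hne' : u p ≠ u (z q) := fun h => hq.1.ne' (u.injective h)
    dsimp only
    split_ifs with h
    · exact ⟨hpq, h⟩
    · exact ⟨hq.1, show u p < u (z q) by omega⟩
  · rintro ⟨p, q⟩ ⟨hpq, hq⟩ ⟨p', q'⟩ ⟨hpq', hq'⟩ heq
    dsimp only at hpq hq hpq' hq' heq
    split_ifs at heq <;> simp only [Prod.mk.injEq] at heq ⊢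
    · exact heq
    · obtain ⟨rfl, rfl⟩ := heq
      omega
    · obtain ⟨rfl, rfl⟩ := heq
      omega
    · exact ⟨heq.2, z.injective heq.1⟩

lemma betaMinPerm_mem_AFPF {z w : Perm ℤ} (hz : z ∈ FInf) (hw : w ∈ AFPF z) :
    betaMinPerm hz ∈ AFPF z := by
  refine ⟨betaMinPerm_mem_SInf hz, eq_inv_mul_Theta_mul_iff.mpr (betaMinPerm_mul hz),
    fun v hv hvz => ?_⟩
  calc lenZ (betaMinPerm hz) = {p : ℤ × ℤ | FpfVisInv z p.1 p.2}.ncard := by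
        rw [lenZ, invSet_betaMinPerm]
    _ ≤ lenZ w := ncard_fpfVisInv_le_lenZ hz hw.1 (eq_inv_mul_Theta_mul_iff.mp hw.2.1)
        (increasingOnCycles_of_mem_AFPF hw)
    _ ≤ lenZ v := hw.2.2 v hv hvz

/-- At the first position `k` where `v` leaves `β_min(z)`, `v k` can be neither a cycle maximum
(forced by its cycle minimum) nor an odd value below `β_min(z) k` (already taken earlier). -/
lemma betaMin_le_of_eqOn {z v : Perm ℤ} (hz : z ∈ FInf) (hv : v ∈ SInf)
    (hvz : v * z = Theta * v) (hinc : IncreasingOnCycles z v) {k : ℤ} (hk : 0 < k)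
    (hagree : Set.EqOn v (betaMin z) (Set.Ioo 0 k)) : betaMin z k ≤ v k := by
  rcases (FInf.apply_ne_self hz k).lt_or_gt with hkz | hkz
  · have hzk := FInf.one_le_apply hz hk
    have hvk : v (z (z k)) = Theta (v (z k)) := DFunLike.congr_fun hvz (z k)
    rw [hagree ⟨hzk, hkz⟩, ← betaMin_apply hz, FInf.apply_apply hz] at hvk
    exact hvk.ge
  by_contra! hlt
  have hvkΘ : v (z k) = Theta (v k) := DFunLike.congr_fun hvz k
  have hvk_odd : v k % 2 = 1 := by
    have := hinc k hk hkz
    rcases Theta_apply_cases (v k) with ⟨_, _⟩ | ⟨_, _⟩ <;> omega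
  obtain ⟨a, ha⟩ := betaMin_surjective hz (v k)
  have ha1 : 1 ≤ a := not_lt.mp fun h => by
    have := SInf.one_le_apply hv hk
    rw [betaMin_of_nonpos (by omega)] at ha
    omega
  have hβk := betaMin_of_pos (z := z) hk
  have hβa := betaMin_of_pos (z := z) ha1
  rw [min_eq_left hkz.le, if_pos hkz] at hβk
  have haz : a < z a := not_le.mp fun h => by
    have := FInf.apply_ne_self hz a
    rw [if_neg (by omega)] at hβa
    omega
  rw [min_eq_left haz.le, if_pos haz] at hβa
  have hak : a < k := (cycleMinCount_lt_iff hk hkz).mp (by omega)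
  have := v.injective ((hagree ⟨by omega, hak⟩).trans ha)
  omega

/-- for `z ∈ F_∞`, the FPF-visible inversions of `z` are exactly the
inversions of the lexicographically minimal atom `β_min(z)`. -/
theorem fpfVisInv_eq_inv_minAtom (z : Equiv.Perm ℤ) (hz : z ∈ FInf)
    (w : Equiv.Perm ℤ) (hw : IsLexMinAtom z w) :
    {p : ℤ × ℤ | FpfVisInv z p.1 p.2} = InvSet w := by
  obtain ⟨hwA, hwmin⟩ := hw
  rcases hwmin _ (betaMinPerm_mem_AFPF hz hwA) with hβw | ⟨k, hk, hlt, hagree⟩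
  · rw [← hβw, invSet_betaMinPerm]
  · have hle := betaMin_le_of_eqOn hz hwA.1 (eq_inv_mul_Theta_mul_iff.mp hwA.2.1)
      (increasingOnCycles_of_mem_AFPF hwA) hk fun j hj => hagree j hj.1 hj.2
    exact absurd hlt hle.not_gt
end
end

section
/- Let z ∈ F_ℤ. Then I(z) is the identity permutation of ℤ if and only if z = Θ. -/
open Equiv

noncomputable section

open Classical in
/-- The involution `I(z)` of `ℤ` (as a function): its nontrivial cycles are exactly the
pairs `(p,q) ∈ Cyc_ℤ(z)` for which there exists `(a,b) ∈ Cyc_ℤ(z)` with `p < b < q`. -/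
def Imap (z : Equiv.Perm ℤ) (i : ℤ) : ℤ :=
  if ∃ a b : ℤ, a < b ∧ z a = b ∧ min i (z i) < b ∧ b < max i (z i) then z i else i

/-!
For a fixed-point-free involution `z`, `I(z) = id` says that no arc `p < z p` contains the right
endpoint of another arc strictly inside it. If some arc had `z p ≥ p + 2`, the arc through `p + 1`
would either end strictly inside `(p, z p)` or contain `z p` strictly inside it; so `z` only swaps
neighbours. Such an involution commutes with `i ↦ i + 2`, as `Θ` does, so the set where `z` and
`Θ` differ is invariant under `i ↦ i + 2`; being finite, it is empty. Conversely, `Θ` only swaps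
neighbours, and then no integer lies strictly between `i` and `z i`.
-/

theorem Set.Finite.eq_empty_of_mapsTo_of_lt {α : Type*} [Preorder α] {s : Set α}
    {f : α → α} (hs : s.Finite) (hmaps : Set.MapsTo f s s) (hf : ∀ a, a < f a) : s = ∅ := by
  by_contra hne
  obtain ⟨a, ha, hmax⟩ := hs.exists_maximal (Set.nonempty_iff_ne_empty.mpr hne)
  exact (hf a).not_ge (hmax (hmaps ha) (hf a).le)

def IsAdjacent (z : Perm ℤ) : Prop := ∀ i, z i = i + 1 ∨ z i = i - 1

theorem Theta_apply (i : ℤ) : Theta i = if Even i then i - 1 else i + 1 := rfl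

theorem Theta_isAdjacent : IsAdjacent Theta := by
  intro i
  rw [Theta_apply]
  split_ifs <;> simp

theorem Theta_add_two (i : ℤ) : Theta (i + 2) = Theta i + 2 := by
  simp only [Theta_apply, Int.even_add, even_two, iff_true]
  split_ifs <;> ring

section

variable {z : Perm ℤ}

theorem Imap_eq_id_of_isAdjacent (hadj : IsAdjacent z) : Imap z = id := by
  funext i
  rw [Imap, if_neg, id]
  rintro ⟨a, b, -, -, hlo, hhi⟩
  rcases hadj i with h | h <;> rw [h] at hlo hhi <;>
    rcases min_lt_iff.mp hlo with hlo | hlo <;> rcases lt_max_iff.mp hhi with hhi | hhi <;> omega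

theorem arc_end_notMem_Ioo_of_Imap_eq_id (h : Imap z = id) {p a : ℤ} (hp : p < z p)
    (ha : a < z a) : z a ∉ Set.Ioo p (z p) := by
  rintro ⟨hlo, hhi⟩
  have hfix : Imap z p = p := congrFun h p
  rw [Imap, if_pos ⟨a, z a, ha, rfl, by rwa [min_eq_left hp.le], by rwa [max_eq_right hp.le]⟩]
    at hfix
  exact hp.ne' hfix

variable (hinv : Function.Involutive z)
include hinv

theorem apply_eq_add_one_of_Imap_eq_id (hfpf : ∀ i, z i ≠ i) (h : Imap z = id) {p : ℤ}
    (hp : p < z p) : z p = p + 1 := by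
  by_contra hne
  have hback : z (z p) = p := hinv p
  have hnest {q a : ℤ} (hq : q < z q) (ha : a < z a) : z a ∉ Set.Ioo q (z q) :=
    arc_end_notMem_Ioo_of_Imap_eq_id h hq ha
  rcases lt_or_gt_of_ne (hfpf (p + 1)) with hlt | hgt
  · exact hnest hp (a := z (p + 1)) (by rwa [hinv]) (by rw [hinv]; constructor <;> omega)
  · rcases lt_trichotomy (z (p + 1)) (z p) with hin | heq | hout
    · exact hnest hp hgt ⟨by omega, hin⟩
    · rw [← heq, hinv] at hback
      omega
    · exact hnest hgt hp ⟨by omega, hout⟩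

theorem isAdjacent_of_Imap_eq_id (hfpf : ∀ i, z i ≠ i) (h : Imap z = id) : IsAdjacent z := by
  intro i
  rcases lt_or_gt_of_ne (hfpf i) with hlt | hgt
  · have hlt' : z i < z (z i) := by rwa [hinv]
    have hsucc := apply_eq_add_one_of_Imap_eq_id hinv hfpf h hlt'
    rw [hinv] at hsucc
    omega
  · exact .inl (apply_eq_add_one_of_Imap_eq_id hinv hfpf h hgt)

theorem IsAdjacent.apply_add_two (hadj : IsAdjacent z) (i : ℤ) :
    z (i + 2) = z i + 2 := by
  have hswap {j k : ℤ} (hjk : z j = k) : z k = j := by rw [← hjk, hinv]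
  rcases hadj i with hi | hi
  · have h1 : z (i + 1) = i := hswap hi
    rcases hadj (i + 2) with h2 | h2
    · omega
    · have : z (i + 1) = i + 2 := hswap (by rw [h2]; ring)
      omega
  · rcases hadj (i + 1) with h1 | h1
    · have : z (i + 2) = i + 1 := hswap (by rw [h1]; ring)
      omega
    · have : z i = i + 1 := hswap (by rw [h1]; ring)
      omega

theorem IsAdjacent.eq_Theta (hadj : IsAdjacent z)
    (hfin : {i : ℤ | z i ≠ Theta i}.Finite) : z = Theta := by
  have hmaps : Set.MapsTo (· + 2) {i : ℤ | z i ≠ Theta i} {i : ℤ | z i ≠ Theta i} := by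
    intro i hi
    simp only [Set.mem_ofPred_eq, hadj.apply_add_two hinv, Theta_add_two] at hi ⊢
    omega
  have hempty := hfin.eq_empty_of_mapsTo_of_lt hmaps (by omega)
  ext i
  by_contra hne
  exact hempty.subset hne

end

/-- for `z ∈ F_ℤ`, `I(z)` is the identity if and only if `z = Θ`. -/
theorem Imap_eq_id_iff (z : Equiv.Perm ℤ) (hz : z ∈ FZ) :
    Imap z = id ↔ z = Theta := by
  obtain ⟨hsq, hfpf, hfin⟩ := hz
  have hinv : Function.Involutive z := fun i => by
    simpa only [Perm.mul_apply, Perm.one_apply] using DFunLike.congr_fun hsq i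
  constructor
  · intro h
    exact (isAdjacent_of_Imap_eq_id hinv hfpf h).eq_Theta hinv hfin
  · rintro rfl
    exact Imap_eq_id_of_isAdjacent Theta_isAdjacent
end
end

section
/- The map I : F_ℤ → {involutions of ℤ with finite support} is injective; that is, if y, z ∈ F_ℤ and I(y) = I(z), then y = z. -/
open Equiv

noncomputable section

/-- Key step: if `Imap y = Imap z`, `m < y m < z m`, and `Imap` fixes `m` for both,
we get a contradiction by looking at the point `y m`. -/
lemma Imap_key (y z : Equiv.Perm ℤ) (hzz : ∀ i, z (z i) = i) (hyy : ∀ i, y (y i) = i)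
    (hzf : ∀ i : ℤ, z i ≠ i) (h : Imap y = Imap z) (m : ℤ)
    (h1 : m < y m) (h2 : y m < z m) (hIy : Imap y m = m) (hIz : Imap z m = m) : False := by
  have hmz : m < z m := h1.trans h2
  have hminz : min m (z m) = m := min_eq_left hmz.le
  have hmaxz : max m (z m) = z m := max_eq_right hmz.le
  have hPz : ¬ ∃ a b : ℤ, a < b ∧ z a = b ∧ min m (z m) < b ∧ b < max m (z m) := by
    intro hP
    have e : Imap z m = z m := by unfold Imap; rw [if_pos hP]
    rw [hIz] at e
    exact hzf m e.symm
  have hPz' : ∀ a b : ℤ, a < b → z a = b → m < b → b < z m → False := by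
    intro a b hab hza hb1 hb2
    exact hPz ⟨a, b, hab, hza, by rwa [hminz], by rwa [hmaxz]⟩
  have hPy : ¬ ∃ a b : ℤ, a < b ∧ y a = b ∧ min m (y m) < b ∧ b < max m (y m) := by
    intro hP
    have e : Imap y m = y m := by unfold Imap; rw [if_pos hP]
    rw [hIy] at e
    exact (ne_of_gt h1) e.symm
  have hminy : min m (y m) = m := min_eq_left h1.le
  have hmaxy : max m (y m) = y m := max_eq_right h1.le
  have hPy' : ∀ a b : ℤ, a < b → y a = b → m < b → b < y m → False := by
    intro a b hab hya hb1 hb2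
    exact hPy ⟨a, b, hab, hya, by rwa [hminy], by rwa [hmaxy]⟩
  -- the z-partner of q := y m lies strictly above z m
  have hq1 : y m < z (y m) := by
    rcases lt_trichotomy (z (y m)) (y m) with hlt | heq | hgt
    · exact (hPz' (z (y m)) (y m) hlt (hzz (y m)) h1 h2).elim
    · exact (hzf (y m) heq).elim
    · exact hgt
  have hq2 : z m < z (y m) := by
    rcases lt_trichotomy (z (y m)) (z m) with hlt | heq | hgt
    · exact (hPz' (y m) (z (y m)) hq1 rfl (h1.trans hq1) hlt).elim
    · have e : y m = m := by
        have := congrArg z heq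
        rwa [hzz, hzz] at this
      exact absurd e (ne_of_gt h1)
    · exact hgt
  -- Imap z moves y m
  have hIzq : Imap z (y m) = z (y m) := by
    unfold Imap
    rw [if_pos ⟨m, z m, hmz, rfl, by rw [min_eq_left hq1.le]; exact h2,
      by rw [max_eq_right hq1.le]; exact hq2⟩]
  -- Imap y fixes y m
  have hIyq : Imap y (y m) = y m := by
    unfold Imap
    rw [if_neg]
    rintro ⟨a, b, hab, hya, hb1, hb2⟩
    rw [hyy m, min_eq_right h1.le] at hb1
    rw [hyy m, max_eq_left h1.le] at hb2
    exact hPy' a b hab hya hb1 hb2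
  have e := congrFun h (y m)
  rw [hIzq, hIyq] at e
  exact hzf (y m) e.symm

/-- the map `I` is injective on `F_ℤ`. -/
theorem Imap_injective (y z : Equiv.Perm ℤ) (hy : y ∈ FZ) (hz : z ∈ FZ)
    (h : Imap y = Imap z) : y = z := by
  by_contra hne
  obtain ⟨hy2, hyf, hyT⟩ := hy
  obtain ⟨hz2, hzf, hzT⟩ := hz
  have hyy : ∀ i, y (y i) = i := fun i => by
    simpa [Equiv.Perm.mul_apply] using Equiv.ext_iff.mp hy2 i
  have hzz : ∀ i, z (z i) = i := fun i => by
    simpa [Equiv.Perm.mul_apply] using Equiv.ext_iff.mp hz2 i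
  -- the difference set is finite and nonempty
  have hDfin : {i : ℤ | y i ≠ z i}.Finite := by
    apply Set.Finite.subset (hyT.union hzT)
    intro i hi
    simp only [Set.mem_setOf_eq] at hi
    by_contra hnot
    simp only [Set.mem_union, Set.mem_setOf_eq, not_or, not_not] at hnot
    exact hi (hnot.1.trans hnot.2.symm)
  have hDne : {i : ℤ | y i ≠ z i}.Nonempty := by
    rcases Set.eq_empty_or_nonempty {i : ℤ | y i ≠ z i} with hE | hNE
    · refine absurd (Equiv.ext fun i => ?_) hne
      have hni : i ∉ ({i : ℤ | y i ≠ z i}) := by rw [hE]; exact Set.notMem_empty i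
      simpa [Set.mem_setOf_eq, not_not] using hni
    · exact hNE
  obtain ⟨m, hmD, hmin⟩ := Set.exists_min_image _ id hDfin hDne
  simp only [Set.mem_setOf_eq] at hmD
  have hagree : ∀ i, i < m → y i = z i := by
    intro i hi
    by_contra hc
    exact absurd hi (not_lt.mpr (hmin i hc))
  -- both y m and z m are above m
  have hym : m < y m := by
    rcases lt_trichotomy (y m) m with hlt | heq | hgt
    · have e1 : z (y m) = m := by rw [← hagree (y m) hlt, hyy]
      have e2 : z m = y m := by rw [← hzz (y m), e1]
      exact (hmD e2.symm).elim
    · exact (hyf m heq).elim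
    · exact hgt
  have hzm : m < z m := by
    rcases lt_trichotomy (z m) m with hlt | heq | hgt
    · have e1 : y (z m) = m := by rw [hagree (z m) hlt, hzz]
      have e2 : y m = z m := by rw [← hyy (z m), e1]
      exact (hmD e2).elim
    · exact (hzf m heq).elim
    · exact hgt
  -- Imap fixes m for both
  have hIym : Imap y m = m := by
    by_cases hP : ∃ a b : ℤ, a < b ∧ y a = b ∧ min m (y m) < b ∧ b < max m (y m)
    · exfalso
      have e1 : Imap y m = y m := by unfold Imap; rw [if_pos hP]
      have e2 := congrFun h m
      rw [e1] at e2
      by_cases hP2 : ∃ a b : ℤ, a < b ∧ z a = b ∧ min m (z m) < b ∧ b < max m (z m)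
      · have e3 : Imap z m = z m := by unfold Imap; rw [if_pos hP2]
        rw [e3] at e2
        exact hmD e2
      · have e3 : Imap z m = m := by unfold Imap; rw [if_neg hP2]
        rw [e3] at e2
        exact (ne_of_gt hym) e2
    · unfold Imap; rw [if_neg hP]
  have hIzm : Imap z m = m := by
    rw [← congrFun h m]
    exact hIym
  rcases lt_or_gt_of_ne hmD with hlt | hgt
  · exact Imap_key y z hzz hyy hzf h m hym hlt hIym hIzm
  · exact Imap_key z y hyy hzz hyf h.symm m hzm hgt hIzm hIym
end
end

section
/- Let z ∈ F_∞, let E = {i ≥ 1 : |z(i) − i| ≠ 1}, and let y be the involution of ℤ with y(i) = z(i) for i ∈ E and y(i) = i for i ∉ E (this y is a well-defined involution with finite support). Then the set of FPF-visible descents of z equals the set of visible descents of y. -/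
open Equiv

noncomputable section

/-- The involution `y` of Lemma: `y(i) = z(i)` if `i ≥ 1` and `|z(i) - i| ≠ 1`, else `y(i) = i`. -/
def yOf (z : Equiv.Perm ℤ) (i : ℤ) : ℤ := if 1 ≤ i ∧ |z i - i| ≠ 1 then z i else i

/-- for `z ∈ F_∞`, the FPF-visible descents of `z` coincide with the
visible descents of the involution `y` obtained from `z` by making all `i` with
`|z(i) - i| = 1` (and all `i ≤ 0`) into fixed points. -/
theorem fpfVisDes_eq_visDes_yOf (z : Equiv.Perm ℤ) (hz : z ∈ FInf) :
    {i : ℤ | FpfVisDes z i} = {i : ℤ | VisDes (yOf z) i} := by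
  obtain ⟨⟨hinv, hfpf, _⟩, hneg⟩ := hz
  have hzz : ∀ i, z (z i) = i := by
    intro i
    have := congrArg (fun p : Equiv.Perm ℤ => p i) hinv
    simpa [Equiv.Perm.mul_apply] using this
  have hinj : Function.Injective z := z.injective
  have hpos : ∀ i : ℤ, 1 ≤ i → 1 ≤ z i := by
    intro i hi
    by_contra h
    push_neg at h
    have h0 : z i ≤ 0 := by omega
    have hth := hneg (z i) h0
    rw [hzz] at hth
    have hth' : i = thetaFun (z i) := hth
    unfold thetaFun at hth'
    rcases Int.even_or_odd (z i) with he | ho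
    · simp [he] at hth'; omega
    · have hne : ¬ Even (z i) := Int.not_even_iff_odd.mpr ho
      obtain ⟨k, hk⟩ := ho
      simp [hne] at hth'
      omega
  ext i
  simp only [Set.mem_setOf_eq, FpfVisDes, FpfVisInv, VisDes]
  constructor
  · rintro ⟨-, h2⟩
    rw [lt_min_iff] at h2
    obtain ⟨h2a, h2b⟩ := h2
    -- show 1 ≤ i
    have hi1 : 1 ≤ i := by
      by_contra hi
      push_neg at hi
      rcases eq_or_lt_of_le (by omega : i ≤ 0) with h0 | h0
      · have := hpos (i + 1) (by omega)
        omega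
      · have hle : i + 1 ≤ 0 := by omega
        have hth := hneg (i + 1) hle
        have hth' : z (i + 1) = thetaFun (i + 1) := hth
        unfold thetaFun at hth'
        by_cases he : Even (i + 1) <;> simp [he] at hth' <;> omega
    have hcond : (1 ≤ i + 1 ∧ |z (i + 1) - (i + 1)| ≠ 1) := by
      constructor
      · omega
      · intro habs
        rw [abs_eq (by norm_num : (0:ℤ) ≤ 1)] at habs
        omega
    rw [le_min_iff]
    unfold yOf
    rw [if_pos hcond]
    refine ⟨by omega, ?_⟩
    by_cases hci : (1 ≤ i ∧ |z i - i| ≠ 1)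
    · rw [if_pos hci]; omega
    · rw [if_neg hci]; omega
  · intro h
    unfold yOf at h
    by_cases hc : (1 ≤ i + 1 ∧ |z (i + 1) - (i + 1)| ≠ 1)
    · rw [if_pos hc] at h
      have hle : z (i + 1) ≤ i := le_trans h (min_le_left _ _)
      have habs := hc.2
      have hnei : z (i + 1) ≠ i := by
        intro he
        apply habs
        rw [he]
        simp [abs_of_nonpos]
      have hnei1 : z (i + 1) ≠ i + 1 := hfpf _
      have hlt : z (i + 1) < i := lt_of_le_of_ne hle hnei
      refine ⟨by omega, ?_⟩
      rw [lt_min_iff]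
      refine ⟨hlt, ?_⟩
      by_cases hci : (1 ≤ i ∧ |z i - i| ≠ 1)
      · rw [if_pos hci] at h
        have hle2 : z (i + 1) ≤ z i := le_trans h (min_le_right _ _)
        have hne2 : z (i + 1) ≠ z i := fun he => by
          have := hinj he; omega
        exact lt_of_le_of_ne hle2 hne2
      · -- y i = i
        push_neg at hci
        have hi0 : 0 ≤ i := by omega
        rcases eq_or_lt_of_le hi0 with h0 | h0
        · exfalso
          have := hpos (i + 1) (by omega)
          omega
        · have h1i : 1 ≤ i := h0
          have habs2 : |z i - i| = 1 := by
            by_contra hne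
            exact hne (hci h1i)
          rw [abs_eq (by norm_num : (0:ℤ) ≤ 1)] at habs2
          rcases habs2 with hp | hm
          · -- z i = i + 1, so z (i+1) = i, contradiction
            exfalso
            have : z (i + 1) = i := by
              have : z (z i) = i := hzz i
              rw [show z i = i + 1 by omega] at this
              exact this
            omega
          · -- z i = i - 1
            have hzi : z i = i - 1 := by omega
            have hne3 : z (i + 1) ≠ i - 1 := by
              intro he
              have : z (i + 1) = z i := by rw [hzi]; exact he
              have := hinj this
              omega
            omega
    · rw [if_neg hc] at h
      have := le_trans h (min_le_left _ _)
      omega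
end
end

section
/- Let z ∈ F_ℤ with z ≠ Θ, and let j be the smallest integer such that z(j) < j − 1 (such j exists). Then j − 1 is the minimal FPF-visible descent of z. -/
open Equiv

noncomputable section

/-- if `z ∈ F_ℤ`, `z ≠ Θ`, and `j` is the smallest integer with
`z(j) < j - 1`, then `j - 1` is the minimal FPF-visible descent of `z`. -/
theorem min_fpfVisDes (z : Equiv.Perm ℤ) (hz : z ∈ FZ) (hzT : z ≠ Theta)
    (j : ℤ) (hj : IsLeast {i : ℤ | z i < i - 1} j) :
    IsLeast {i : ℤ | FpfVisDes z i} (j - 1) := by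
  obtain ⟨hzz, hfpf, _⟩ := hz
  obtain ⟨hj1, hj2⟩ := hj
  have hj1' : z j < j - 1 := hj1
  constructor
  · have h2 : ¬ z (j - 1) < (j - 1) - 1 := fun h => by have := hj2 h; omega
    push_neg at h2
    have hne : z j ≠ z (j - 1) := fun h => by
      have := z.injective h; omega
    have heq : j - 1 + 1 = j := by ring
    refine ⟨by omega, ?_⟩
    rw [heq]
    have hfp : z (j - 1) ≠ j - 1 := hfpf (j - 1)
    omega
  · rintro i ⟨-, hlt⟩
    have : z (i + 1) < (i + 1) - 1 := by omega
    have := hj2 this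
    omega
end
end

section
/- Let z ∈ F_ℤ with z ≠ Θ, let (q,r) be the lexicographically maximal FPF-visible inversion of z, and let m be the largest even integer such that z(m) ≠ m − 1. Then: q is the maximal FPF-visible descent of z; r is the maximal integer with z(r) < min{q, z(q)}; z(q+1) < z(q+2) < ⋯ < z(m) ≤ q; and either (a) z(q) < q < r ≤ m, or (b) q < z(q) = r + 1 = m. -/
open Equiv

noncomputable section

/-- properties of the lexicographically maximal FPF-visible inversion
`(q, r)` of `z ∈ F_ℤ - {Θ}`, where `m` is the largest even integer with `z(m) ≠ m - 1`. -/
theorem max_fpfVisInv_dichotomy (z : Equiv.Perm ℤ) (hz : z ∈ FZ) (hzT : z ≠ Theta)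
    (q r m : ℤ) (hqr : IsMaxVisInv z q r)
    (hm : Even m ∧ z m ≠ m - 1 ∧ ∀ m' : ℤ, Even m' → z m' ≠ m' - 1 → m' ≤ m) :
    (FpfVisDes z q ∧ ∀ i : ℤ, FpfVisDes z i → i ≤ q) ∧
    (z r < min q (z q) ∧ ∀ j : ℤ, z j < min q (z q) → j ≤ r) ∧
    (∀ i : ℤ, q + 1 ≤ i → i < m → z i < z (i + 1)) ∧ z m ≤ q ∧
    ((z q < q ∧ q < r ∧ r ≤ m) ∨ (q < z q ∧ z q = r + 1 ∧ r + 1 = m)) := by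
  obtain ⟨hz2, hfpf, -⟩ := hz
  have hinv : ∀ i, z (z i) = i := by
    intro i
    have := Equiv.ext_iff.mp hz2 i
    simpa [Equiv.Perm.mul_apply] using this
  have hinj : ∀ a b : ℤ, z a = z b → a = b := fun a b h => z.injective h
  obtain ⟨hmE, hmne, hmmax⟩ := hm
  -- even j beyond m
  have heven : ∀ j : ℤ, Even j → m < j → z j = j - 1 := by
    intro j hj hlt
    by_contra h
    exact absurd (hmmax j hj h) (by omega)
  -- everything beyond m maps beyond m, and z j ≥ j - 1
  have hbig : ∀ j : ℤ, m < j → m < z j ∧ j - 1 ≤ z j := by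
    intro j hj
    by_cases h : Even j
    · rw [heven j h hj]
      obtain ⟨a, ha⟩ := h
      obtain ⟨b, hb⟩ := hmE
      omega
    · have hj1 : Even (j + 1) := Int.even_add_one.mpr h
      have h1 : z (j + 1) = j := by rw [heven (j+1) hj1 (by omega)]; ring
      have h2 : z j = j + 1 := by
        have := hinv (j + 1)
        rw [h1] at this
        exact this
      omega
  have hzm2 : z m ≤ m - 2 := by
    have h1 : z m ≠ m := hfpf m
    have h3 : ¬ m < z m := by
      intro h
      have := (hbig (z m) h).1
      rw [hinv] at this
      omega
    omega
  have hzm1 : z (m - 1) ≤ m - 2 := by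
    have h1 : z (m - 1) ≠ m - 1 := hfpf _
    have h2 : z (m - 1) ≠ m := by
      intro h
      apply hmne
      have := hinv (m - 1)
      rw [h] at this
      exact this
    have h3 : ¬ m < z (m - 1) := by
      intro h
      have := (hbig (z (m-1)) h).1
      rw [hinv] at this
      omega
    omega
  obtain ⟨⟨hqr1, hqr2⟩, hmaxinv⟩ := hqr
  have noinv : ∀ a b : ℤ, FpfVisInv z a b → a ≤ q := by
    intro a b h
    rcases hmaxinv a b h with h' | h' <;> omega
  have noinvq : ∀ b : ℤ, FpfVisInv z q b → b ≤ r := by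
    intro b h
    rcases hmaxinv q b h with h' | h' <;> omega
  have maxdes : ∀ i : ℤ, FpfVisDes z i → i ≤ q := fun i hi => noinv i (i+1) hi
  have qdes : FpfVisDes z q := by
    by_contra h
    have h' : ¬ (q < q + 1 ∧ z (q+1) < min q (z q)) := h
    push_neg at h'
    have hge : min q (z q) ≤ z (q + 1) := h' (by omega)
    have hrne : r ≠ q + 1 := by
      rintro rfl
      omega
    have hvi : FpfVisInv z (q+1) r := by
      refine ⟨by omega, ?_⟩
      omega
    have := noinv _ _ hvi
    omega
  have q_lt_m : q < m := by
    by_contra h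
    push_neg at h
    have h1 := hbig r (by omega)
    omega
  have r_le_m : r ≤ m := by
    by_contra h
    push_neg at h
    have h1 := hbig r h
    omega
  have zm_le_q : z m ≤ q := by
    by_contra h
    push_neg at h
    have hne : z (m - 1) ≠ z m := fun hc => by have := hinj _ _ hc; omega
    rcases lt_or_gt_of_ne hne with hc | hc
    · have hvi : FpfVisInv z (z m) (m - 1) := by
        refine ⟨by omega, ?_⟩
        rw [hinv]
        omega
      have := noinv _ _ hvi
      omega
    · have hvi : FpfVisInv z (m - 1) m := by
        refine ⟨by omega, ?_⟩
        omega
      have := noinv _ _ hvi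
      omega
  have L1 : ∀ k : ℤ, q < k → k < m → z k < k := by
    intro k h1 h2
    by_contra h
    push_neg at h
    have hk : k < z k := lt_of_le_of_ne h (Ne.symm (hfpf k))
    have hvi : FpfVisInv z k m := ⟨h2, by omega⟩
    have := noinv _ _ hvi
    omega
  have chain : ∀ i : ℤ, q + 1 ≤ i → i < m → z i < z (i + 1) := by
    intro i h1 h2
    have hlt := L1 i (by omega) h2
    have hnd : ¬ FpfVisDes z i := fun hd => absurd (maxdes i hd) (by omega)
    have hnd' : ¬ (i < i + 1 ∧ z (i+1) < min i (z i)) := hnd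
    push_neg at hnd'
    have hge : min i (z i) ≤ z (i + 1) := hnd' (by omega)
    have hne : z (i + 1) ≠ z i := fun hc => by have := hinj _ _ hc; omega
    omega
  have mono : ∀ n : ℕ, ∀ k : ℤ, q + 1 ≤ k → k + n ≤ m → z k ≤ z (k + n) := by
    intro n
    induction n with
    | zero => intro k _ _; simp
    | succ n ih =>
      intro k h1 h2
      have h2' : k + (n : ℤ) + 1 ≤ m := by push_cast at h2; omega
      have ha := ih k h1 (by omega)
      have hb := chain (k + n) (by omega) (by omega)
      have hcast : k + ((n : ℕ) + 1 : ℕ) = (k + (n : ℤ)) + 1 := by push_cast; ring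
      rw [hcast]
      omega
  have mono' : ∀ k l : ℤ, q + 1 ≤ k → k ≤ l → l ≤ m → z k ≤ z l := by
    intro k l hk hkl hlm
    obtain ⟨n, rfl⟩ : ∃ n : ℕ, l = k + n := ⟨(l - k).toNat, by omega⟩
    exact mono n k hk (by omega)
  have rmax : ∀ j : ℤ, z j < min q (z q) → j ≤ r := by
    intro j hj
    by_contra h
    push_neg at h
    have hvi : FpfVisInv z q j := ⟨by omega, hj⟩
    have := noinvq j hvi
    omega
  refine ⟨⟨qdes, maxdes⟩, ⟨hqr2, rmax⟩, chain, zm_le_q, ?_⟩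
  rcases lt_or_gt_of_ne (hfpf q) with hq | hq
  · exact Or.inl ⟨hq, hqr1, r_le_m⟩
  · right
    have hzq_le : z q ≤ m := by
      by_contra h
      push_neg at h
      have := (hbig (z q) h).1
      rw [hinv] at this
      omega
    have hpm : z q = m := by
      by_contra hne
      have h1 : z (z q) ≤ z (m - 1) := mono' (z q) (m - 1) (by omega) (by omega) (by omega)
      rw [hinv] at h1
      have h2 := chain (m - 1) (by omega) (by omega)
      have h3 : z (m - 1 + 1) = z m := by norm_num
      omega
    have hzmq : z m = q := by rw [← hpm, hinv]
    have hm2 : q + 2 ≤ m := by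
      by_contra h
      push_neg at h
      have hrm : r = m := by omega
      rw [hrm, hzmq] at hqr2
      omega
    have hr1 : r ≠ m := by
      intro h
      rw [h, hzmq] at hqr2
      omega
    have h2 := chain (m - 1) (by omega) (by omega)
    have h3 : z (m - 1 + 1) = z m := by norm_num
    have hvi : FpfVisInv z q (m - 1) := ⟨by omega, by omega⟩
    have := noinvq (m - 1) hvi
    exact ⟨hq, by omega, by omega⟩
end
end

section
/- Let z ∈ F_ℤ with z ≠ Θ, let (q,r) be the lexicographically maximal FPF-visible inversion of z, and let η_FPF(z) = (q,r) z (q,r). Then Ψ̂⁺(η_FPF(z), q) = {z}. -/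
open Equiv

noncomputable section

/-- `Ψ̂⁺(y, r) = {z ∈ F_ℤ : ℓ̂_FPF(z) = ℓ̂_FPF(y) + 1 and z = (r,j) y (r,j) for some j > r}`. -/
def PsiPlus (y : Equiv.Perm ℤ) (r : ℤ) : Set (Equiv.Perm ℤ) :=
  {z | z ∈ FZ ∧ fpfLen z = fpfLen y + 1 ∧
    ∃ j : ℤ, r < j ∧ z = Equiv.swap r j * y * Equiv.swap r j}

/-- `Ψ̂⁻(y, r) = {z ∈ F_ℤ : ℓ̂_FPF(z) = ℓ̂_FPF(y) + 1 and z = (i,r) y (i,r) for some i < r}`. -/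
def PsiMinus (y : Equiv.Perm ℤ) (r : ℤ) : Set (Equiv.Perm ℤ) :=
  {z | z ∈ FZ ∧ fpfLen z = fpfLen y + 1 ∧
    ∃ i : ℤ, i < r ∧ z = Equiv.swap i r * y * Equiv.swap i r}

-- ============ auxiliary development ============
namespace AuxFpf

lemma theta_apply (i : ℤ) : Theta i = thetaFun i := rfl

lemma theta_bounds (i : ℤ) : i - 1 ≤ thetaFun i ∧ thetaFun i ≤ i + 1 := by
  unfold thetaFun; split <;> omega

lemma theta_no_inv {i j : ℤ} (hij : i < j) (h : thetaFun j < thetaFun i) :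
    thetaFun i = j := by
  unfold thetaFun at *
  simp only [Int.even_iff] at *
  split_ifs at * <;> omega

def vSet (f : ℤ → ℤ) : Set (ℤ × ℤ) := {p | p.1 < p.2 ∧ f p.2 < p.1 ∧ f p.2 < f p.1}

lemma mem_vSet {f : ℤ → ℤ} {p : ℤ × ℤ} :
    p ∈ vSet f ↔ p.1 < p.2 ∧ f p.2 < p.1 ∧ f p.2 < f p.1 := Iff.rfl

lemma fpfVisInv_iff {z : Equiv.Perm ℤ} {i j : ℤ} :
    FpfVisInv z i j ↔ i < j ∧ z j < i ∧ z j < z i := by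
  unfold FpfVisInv
  rw [lt_min_iff]

lemma fz_invol {z : Equiv.Perm ℤ} (hz : z ∈ FZ) : ∀ i, z (z i) = i := by
  intro i
  have h := hz.1
  calc z (z i) = (z * z) i := rfl
    _ = i := by rw [h]; rfl

lemma exists_bound {z : Equiv.Perm ℤ} (hz : z ∈ FZ) :
    ∃ N : ℤ, 1 ≤ N ∧ (∀ i, N < i → z i = thetaFun i) ∧ (∀ i, i < -N → z i = thetaFun i) ∧
      (∀ i, -N ≤ i → i ≤ N → -2*N ≤ z i ∧ z i ≤ 2*N) := by
  obtain ⟨-, -, hE⟩ := hz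
  obtain ⟨u, hu⟩ := hE.bddAbove
  obtain ⟨l, hl⟩ := hE.bddBelow
  have hIm : (⇑z '' Set.Icc l u).Finite := (Set.finite_Icc l u).image _
  obtain ⟨u2, hu2⟩ := hIm.bddAbove
  obtain ⟨l2, hl2⟩ := hIm.bddBelow
  have a1 := abs_nonneg l; have a2 := abs_nonneg u; have a3 := abs_nonneg l2
  have a4 := abs_nonneg u2
  have b1 := le_abs_self l; have b2 := le_abs_self u; have b3 := le_abs_self l2
  have b4 := le_abs_self u2
  have c1 := neg_abs_le l; have c2 := neg_abs_le u; have c3 := neg_abs_le l2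
  have c4 := neg_abs_le u2
  refine ⟨|l| + |u| + |l2| + |u2| + 1, by omega, ?_, ?_, ?_⟩
  · intro i hi
    have h1 : ¬ (z i ≠ Theta i) := by
      intro hne
      have := hu hne
      omega
    push_neg at h1
    rw [h1, theta_apply]
  · intro i hi
    have h1 : ¬ (z i ≠ Theta i) := by
      intro hne
      have := hl hne
      omega
    push_neg at h1
    rw [h1, theta_apply]
  · intro i hi1 hi2
    by_cases hmem : i ∈ Set.Icc l u
    · have h1 : z i ∈ ⇑z '' Set.Icc l u := ⟨i, hmem, rfl⟩
      have := hu2 h1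
      have := hl2 h1
      omega
    · have h2 : ¬ (z i ≠ Theta i) := by
        intro hne
        exact hmem ⟨hl hne, hu hne⟩
      push_neg at h2
      have := theta_bounds i
      rw [h2, theta_apply]
      omega

lemma invmc_finite {z : Equiv.Perm ℤ} (hz : z ∈ FZ) : ((InvSet z) \ (CycSet z)).Finite := by
  obtain ⟨N, hN1, hb1, hb2, hb3⟩ := exists_bound hz
  apply Set.Finite.subset ((Set.finite_Icc (-2*N-2) (2*N+4)).prod (Set.finite_Icc (-2*N-2) (2*N+4)))
  rintro ⟨i, k⟩ ⟨⟨hik, hinv⟩, hcyc⟩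
  simp only [InvSet, CycSet, Set.mem_setOf_eq, not_and] at hik hinv hcyc ⊢
  have hcyc' : z i ≠ k := hcyc hik
  -- first: i ≤ N
  have hiN : i ≤ N := by
    by_contra hc
    push_neg at hc
    have hkN : N < k := by omega
    rw [hb1 i hc, hb1 k hkN] at hinv
    have := theta_no_inv hik hinv
    rw [hb1 i hc] at hcyc'
    exact hcyc' this
  -- i ≥ -2N-2
  have hiL : -2*N - 2 ≤ i := by
    by_contra hc
    push_neg at hc
    have hiz : z i = thetaFun i := hb2 i (by omega)
    have hti := theta_bounds i
    by_cases hk1 : k < -N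
    · rw [hiz, hb2 k hk1] at hinv
      have := theta_no_inv hik hinv
      rw [hiz] at hcyc'
      exact hcyc' this
    · push_neg at hk1
      by_cases hk2 : k ≤ N
      · have := hb3 k hk1 hk2
        rw [hiz] at hinv
        omega
      · push_neg at hk2
        have := theta_bounds k
        rw [hiz, hb1 k hk2] at hinv
        omega
  -- value bound for z i
  have hvi : z i ≤ 2*N := by
    by_cases hiL2 : -N ≤ i
    · exact (hb3 i hiL2 hiN).2
    · push_neg at hiL2
      have := theta_bounds i
      rw [hb2 i hiL2]
      omega
  -- k ≤ 2N+4
  have hkU : k ≤ 2*N + 4 := by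
    by_contra hc
    push_neg at hc
    have := theta_bounds k
    rw [hb1 k (by omega)] at hinv
    omega
  exact ⟨⟨by omega, by omega⟩, ⟨by omega, by omega⟩⟩

lemma vSet_subset {z : Equiv.Perm ℤ} (hz : z ∈ FZ) :
    vSet ⇑z ⊆ (InvSet z) \ (CycSet z) := by
  rintro ⟨i, k⟩ ⟨h1, h2, h3⟩
  dsimp only at h1 h2 h3
  refine ⟨⟨h1, h3⟩, ?_⟩
  rintro ⟨-, hc⟩
  dsimp only at hc
  have h4 : z k = i := by rw [← hc, fz_invol hz]
  omega

lemma vSet_finite {z : Equiv.Perm ℤ} (hz : z ∈ FZ) : (vSet ⇑z).Finite :=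
  (invmc_finite hz).subset (vSet_subset hz)

lemma fpfLen_eq_ncard_vSet {z : Equiv.Perm ℤ} (hz : z ∈ FZ) :
    fpfLen z = (vSet ⇑z).ncard := by
  have hzz := fz_invol hz
  have hV : (vSet ⇑z).Finite := vSet_finite hz
  set ι : ℤ × ℤ → ℤ × ℤ := fun p => (z p.2, z p.1) with hι
  have hsplit : (InvSet z) \ (CycSet z) = vSet ⇑z ∪ ι '' (vSet ⇑z) := by
    ext ⟨i, k⟩
    constructor
    · rintro ⟨⟨h1, h2⟩, h3⟩
      dsimp only [InvSet, Set.mem_setOf_eq] at h1 h2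
      have h3' : z i ≠ k := by
        intro hc
        exact h3 ⟨h1, hc⟩
      by_cases hc : z k < i
      · exact Or.inl ⟨h1, hc, h2⟩
      · push_neg at hc
        have hzk : i < z k := by
          rcases lt_or_eq_of_le hc with h | h
          · exact h
          · exfalso; apply h3'; rw [h, hzz]
        refine Or.inr ⟨(z k, z i), ⟨?_, ?_, ?_⟩, ?_⟩
        · exact h2
        · show z (z i) < z k
          rw [hzz]; exact hzk
        · show z (z i) < z (z k)
          rw [hzz, hzz]; exact h1
        · simp only [hι]
          show (z (z i), z (z k)) = (i, k)
          rw [hzz, hzz]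
    · rintro (⟨h1, h2, h3⟩ | ⟨⟨u, v⟩, ⟨g1, g2, g3⟩, h5⟩)
      · dsimp only at h1 h2 h3
        refine ⟨⟨h1, h3⟩, ?_⟩
        rintro ⟨-, hc⟩
        dsimp only at hc
        have h4 : z k = i := by rw [← hc, hzz]
        omega
      · dsimp only at g1 g2 g3
        simp only [hι, Prod.mk.injEq] at h5
        obtain ⟨e1, e2⟩ := h5
        subst e1 e2
        refine ⟨⟨g3, ?_⟩, ?_⟩
        · show z (z u) < z (z v)
          rw [hzz, hzz]; exact g1
        · rintro ⟨-, hc⟩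
          dsimp only at hc
          have hc2 : z (z (z v)) = z (z u) := by rw [hc]
          rw [hzz, hzz] at hc2
          omega
  have hdisj : Disjoint (vSet ⇑z) (ι '' (vSet ⇑z)) := by
    rw [Set.disjoint_left]
    rintro ⟨i, k⟩ ⟨h1, h2, h3⟩ ⟨⟨u, v⟩, ⟨g1, g2, g3⟩, h5⟩
    dsimp only at h1 h2 h3 g1 g2 g3
    simp only [hι, Prod.mk.injEq] at h5
    obtain ⟨e1, e2⟩ := h5
    subst e1 e2
    have h2' : z (z u) < z v := h2
    rw [hzz] at h2'
    omega
  have hinj : Set.InjOn ι (vSet ⇑z) := by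
    rintro ⟨i, k⟩ - ⟨u, v⟩ - h
    simp only [hι, Prod.mk.injEq] at h
    obtain ⟨e1, e2⟩ := h
    have e1' : i = u := by have h6 := congrArg z e2; rwa [hzz, hzz] at h6
    have e2' : k = v := by have h6 := congrArg z e1; rwa [hzz, hzz] at h6
    simp [e1', e2']
  have hcard : ((InvSet z) \ (CycSet z)).ncard = 2 * (vSet ⇑z).ncard := by
    rw [hsplit, Set.ncard_union_eq hdisj hV (hV.image _), Set.ncard_image_of_injOn hinj]
    ring
  unfold fpfLen
  rw [hcard]
  omega

-- ===================== Lemma B =====================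

lemma mem_vSet_mk {f : ℤ → ℤ} {i k : ℤ} :
    (i, k) ∈ vSet f ↔ i < k ∧ f k < i ∧ f k < f i := Iff.rfl

section KeyB

variable {z y : ℤ → ℤ} {a b q r : ℤ}

lemma keyB
    (hzz : ∀ i, z (z i) = i) (hzfpf : ∀ i, z i ≠ i)
    (haq : a < q) (hqr : q < r) (hab : a < b)
    (hzr : z r = a) (hzq : z q = b)
    (hM : ∀ i k, i < k → z k < i → z k < z i → i < q ∨ (i = q ∧ k ≤ r))
    (hyq : y q = a) (hyr : y r = b) (hya : y a = q) (hyb : y b = r)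
    (hyo : ∀ i, i ≠ q → i ≠ r → i ≠ a → i ≠ b → y i = z i) :
    vSet z = insert (q, r)
      ((fun p : ℤ × ℤ => (p.1, if p.2 = q then r else if p.2 = r then q else p.2)) '' vSet y) := by
  have hza : z a = r := by rw [← hzr, hzz]
  have hzb : z b = q := by rw [← hzq, hzz]
  have hbq : b ≠ q := by intro h; apply hzfpf q; rw [hzq, h]
  have hbr : b ≠ r := by
    intro h; rw [h] at hzb
    rw [hzr] at hzb; omega
  have hba : b ≠ a := by
    intro h; rw [h] at hzb; rw [hza] at hzb; omega
  have hM1 : ∀ i, q < i → i < r → z i < a := by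
    intro i h1 h2
    by_contra hc
    push_neg at hc
    have hne : z i ≠ a := by
      intro h
      have h5 := congrArg z h
      rw [hzz, hza] at h5
      omega
    have h6 := hM i r h2 (by omega) (by rw [hzr]; omega)
    omega
  have hM4 : b < q ∨ r < b := by
    rcases lt_trichotomy b q with h | h | h
    · exact Or.inl h
    · exact absurd h hbq
    rcases lt_trichotomy b r with h2 | h2 | h2
    · have := hM1 b h h2
      rw [hzb] at this
      omega
    · exact absurd h2 hbr
    · exact Or.inr h2
  have hM2 : ∀ k, r < k → ¬(z k < q ∧ z k < b) := by
    rintro k hk ⟨c1, c2⟩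
    have h6 := hM q k (by omega) c1 (by rw [hzq]; exact c2)
    omega
  have hM3 : ∀ k, r < k → ¬(q < z k ∧ z k < r) := by
    rintro k hk ⟨c1, c2⟩
    have h6 := hM (z k) r c2 (by rw [hzr]; omega) (by rw [hzr, hzz]; omega)
    omega
  have hM5 : ∀ x, q < x → x < b → z x < q := by
    intro x h1 h2
    have hne : z x ≠ q := by
      intro h
      have h5 := congrArg z h
      rw [hzz, hzq] at h5
      omega
    by_contra hc
    push_neg at hc
    have h6 := hM x b h2 (by rw [hzb]; exact h1) (by rw [hzb]; omega)
    omega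
  -- P1 : vSet y → vSet z (shifted)
  have hP1 : ∀ i k : ℤ, i < k → y k < i → y k < y i →
      ((i, if k = q then r else if k = r then q else k) ∈ vSet z) := by
    intro i k h1 h2 h3
    by_cases hkq : k = q
    · rw [if_pos hkq]
      rw [hkq, hyq] at h2 h3
      rw [mem_vSet_mk, hzr]
      refine ⟨by omega, by omega, ?_⟩
      by_cases hia : i = a
      · omega
      by_cases hib : i = b
      · rw [hib, hzb]; omega
      · rw [← hyo i (by omega) (by omega) hia hib]; exact h3
    by_cases hkr : k = r
    · rw [if_neg hkq, if_pos hkr]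
      rw [hkr, hyr] at h2 h3
      rw [mem_vSet_mk, hzq]
      have hiq : i ≠ q := by
        intro h; rw [h, hyq] at h3; omega
      have hilt : i < q := by
        by_contra hc
        push_neg at hc
        have h4 : q < i := by omega
        have hia : i ≠ a := by omega
        have hib : i ≠ b := by rcases hM4 with h | h <;> omega
        rw [hyo i hiq (by omega) hia hib] at h3
        have := hM1 i h4 (by omega)
        omega
      refine ⟨hilt, h2, ?_⟩
      by_cases hia : i = a
      · omega
      by_cases hib : i = b
      · omega
      · rw [← hyo i hiq (by omega) hia hib]; exact h3
    · rw [if_neg hkq, if_neg hkr]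
      rw [mem_vSet_mk]
      by_cases hka : k = a
      · rw [hka, hya] at h2; omega
      by_cases hkb : k = b
      · rw [hkb, hyb] at h2 h3
        rw [hkb, hzb]
        have hiq : i ≠ q := by omega
        have hir : i ≠ r := by omega
        have hia : i ≠ a := by omega
        have hib : i ≠ b := by omega
        rw [hyo i hiq hir hia hib] at h3
        exact ⟨by omega, by omega, by omega⟩
      · rw [hyo k hkq hkr hka hkb] at h2 h3
        refine ⟨h1, h2, ?_⟩
        by_cases hiq : i = q
        · rw [hiq, hyq] at h3; rw [hiq, hzq]; omega
        by_cases hir : i = r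
        · exfalso
          rw [hir, hyr] at h3
          rw [hir] at h1
          have hq1 : ¬(z k < q ∧ z k < b) := hM2 k h1
          have hzkq : z k ≠ q := by
            intro h
            have h5 := congrArg z h
            rw [hzz, hzq] at h5
            exact hkb h5
          have hq2 : ¬(q < z k ∧ z k < r) := hM3 k h1
          rw [hir] at h2
          omega
        by_cases hia : i = a
        · rw [hia, hza]; rw [hia] at h2; omega
        by_cases hib : i = b
        · rw [hib, hyb] at h3
          rw [hib, hzb]
          rcases hM4 with h | h
          · rw [hib] at h2; omega
          · exfalso
            rw [hib] at h1
            have hq1 : ¬(z k < q ∧ z k < b) := hM2 k (by omega)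
            have hzkq : z k ≠ q := by
              intro h5
              have h6 := congrArg z h5
              rw [hzz, hzq] at h6
              exact hkb h6
            have hzkr : z k ≠ r := by
              intro h5
              have h6 := congrArg z h5
              rw [hzz, hzr] at h6
              exact hka h6
            have hq2 : ¬(q < z k ∧ z k < r) := hM3 k (by omega)
            rw [hib] at h2
            omega
        · rw [← hyo i hiq hir hia hib]; exact h3
  -- P2 : vSet z minus top → vSet y (shifted)
  have hP2 : ∀ i k : ℤ, i < k → z k < i → z k < z i → ¬(i = q ∧ k = r) →
      ((i, if k = q then r else if k = r then q else k) ∈ vSet y) := by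
    intro i k h1 h2 h3 htop
    by_cases hkq : k = q
    · rw [if_pos hkq]
      rw [hkq, hzq] at h2 h3
      rw [mem_vSet_mk, hyr]
      refine ⟨by omega, h2, ?_⟩
      by_cases hia : i = a
      · omega
      by_cases hib : i = b
      · rw [hib] at h2; omega
      · rw [hyo i (by omega) (by omega) hia hib]; exact h3
    by_cases hkr : k = r
    · rw [if_neg hkq, if_pos hkr]
      rw [hkr, hzr] at h2 h3
      rw [mem_vSet_mk, hyq]
      have hiq : i ≠ q := fun h => htop ⟨h, hkr⟩
      have hilt : i < q := by
        by_contra hc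
        push_neg at hc
        have h4 : q < i := by omega
        have hia : i ≠ a := by omega
        have hib : i ≠ b := by rcases hM4 with h | h <;> omega
        have := hM1 i h4 (by omega)
        omega
      refine ⟨hilt, h2, ?_⟩
      by_cases hia : i = a
      · omega
      by_cases hib : i = b
      · rw [hib, hyb]; omega
      · rw [hyo i hiq (by omega) hia hib]; exact h3
    · rw [if_neg hkq, if_neg hkr]
      rw [mem_vSet_mk]
      by_cases hka : k = a
      · rw [hka, hza] at h2; rw [hka] at h1; omega
      by_cases hkb : k = b
      · exfalso
        rw [hkb, hzb] at h2 h3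
        rw [hkb] at h1
        have := hM5 i (by omega) h1
        omega
      · refine ⟨h1, ?_, ?_⟩
        · rw [hyo k hkq hkr hka hkb]; exact h2
        rw [hyo k hkq hkr hka hkb]
        by_cases hiq : i = q
        · rw [hiq, hzq] at h3
          rw [hiq, hyq]
          rw [hiq] at h1
          rcases lt_trichotomy k r with h | h | h
          · have := hM1 k h1 h
            omega
          · exact absurd h hkr
          · exfalso
            have := hM2 k h
            omega
        by_cases hir : i = r
        · rw [hir, hzr] at h3; rw [hir, hyr]; omega
        by_cases hia : i = a
        · rw [hia, hya]; rw [hia] at h2; omega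
        by_cases hib : i = b
        · rw [hib, hzb] at h3; rw [hib, hyb]; omega
        · rw [hyo i hiq hir hia hib]; exact h3
  -- assemble
  ext ⟨i, k⟩
  constructor
  · rintro ⟨h1, h2, h3⟩
    dsimp only at h1 h2 h3
    by_cases htop : i = q ∧ k = r
    · exact Set.mem_insert_iff.mpr (Or.inl (by rw [htop.1, htop.2]))
    · refine Set.mem_insert_iff.mpr (Or.inr ?_)
      refine ⟨(i, if k = q then r else if k = r then q else k), hP2 i k h1 h2 h3 htop, ?_⟩
      have hqr' : (q : ℤ) ≠ r := by omega
      have hrq' : (r : ℤ) ≠ q := by omega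
      by_cases hkq : k = q
      · rw [if_pos hkq]
        dsimp only
        rw [if_neg hrq', if_pos rfl, hkq]
      by_cases hkr : k = r
      · rw [if_neg hkq, if_pos hkr]
        dsimp only
        rw [if_pos rfl, hkr]
      · rw [if_neg hkq, if_neg hkr]
        dsimp only
        rw [if_neg hkq, if_neg hkr]
  · intro h
    rcases Set.mem_insert_iff.mp h with h | h
    · rw [h, mem_vSet_mk, hzr, hzq]
      exact ⟨hqr, haq, hab⟩
    · obtain ⟨⟨i', k'⟩, hmem, heq⟩ := h
      rw [mem_vSet_mk] at hmem
      obtain ⟨g1, g2, g3⟩ := hmem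
      have := hP1 i' k' g1 g2 g3
      simp only [Prod.mk.injEq] at heq
      obtain ⟨e1, e2⟩ := heq
      rw [← e1, ← e2]
      exact this

end KeyB
-- ===================== ncard corollary of keyB =====================

lemma keyB_ncard {z y : ℤ → ℤ} {a b q r : ℤ}
    (hzz : ∀ i, z (z i) = i) (hzfpf : ∀ i, z i ≠ i)
    (haq : a < q) (hqr : q < r) (hab : a < b)
    (hzr : z r = a) (hzq : z q = b)
    (hM : ∀ i k, i < k → z k < i → z k < z i → i < q ∨ (i = q ∧ k ≤ r))
    (hyq : y q = a) (hyr : y r = b) (hya : y a = q) (hyb : y b = r)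
    (hyo : ∀ i, i ≠ q → i ≠ r → i ≠ a → i ≠ b → y i = z i)
    (hfy : (vSet y).Finite) :
    (vSet z).ncard = (vSet y).ncard + 1 := by
  rw [keyB hzz hzfpf haq hqr hab hzr hzq hM hyq hyr hya hyb hyo]
  have hinj : Set.InjOn
      (fun p : ℤ × ℤ => (p.1, if p.2 = q then r else if p.2 = r then q else p.2)) (vSet y) := by
    rintro ⟨i1, k1⟩ - ⟨i2, k2⟩ - h
    simp only [Prod.mk.injEq] at h
    obtain ⟨e1, e2⟩ := h
    have e3 : k1 = k2 := by
      split_ifs at e2 <;> omega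
    simp only [Prod.mk.injEq]
    exact ⟨e1, e3⟩
  have hnm : (q, r) ∉
      (fun p : ℤ × ℤ => (p.1, if p.2 = q then r else if p.2 = r then q else p.2)) '' vSet y := by
    rintro ⟨⟨i, k⟩, hmem, heq⟩
    simp only [Prod.mk.injEq] at heq
    obtain ⟨e1, e2⟩ := heq
    rw [mem_vSet_mk] at hmem
    obtain ⟨m1, m2, m3⟩ := hmem
    have e3 : k = q := by
      split_ifs at e2 <;> omega
    omega
  rw [Set.ncard_insert_of_notMem hnm ((hfy.image _).subset (by rfl)),
    Set.ncard_image_of_injOn hinj]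

-- ===================== Lemma U1 =====================

lemma keyU1 {y w : ℤ → ℤ} {a c q j : ℤ}
    (hca : c < a) (haq : a < q) (hqj : q < j)
    (hyq : y q = a) (hyj : y j = c) (hya : y a = q) (hyc : y c = j)
    (hwq : w q = c) (hwj : w j = a) (hwa : w a = j) (hwc : w c = q)
    (hwo : ∀ i, i ≠ q → i ≠ j → i ≠ a → i ≠ c → w i = y i)
    (hfy : (vSet y).Finite) :
    (vSet w).ncard ≤ (vSet y).ncard := by
  set ψ : ℤ × ℤ → ℤ × ℤ := fun p =>
    if p.1 = j ∧ c ≤ y p.2 then (q, p.2)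
    else if p.2 = q ∧ min p.1 (y p.1) ≤ a then (p.1, j)
    else p with hψ
  have hmem : ∀ p ∈ vSet w, ψ p ∈ vSet y := by
    rintro ⟨i, k⟩ ⟨h1, h2, h3⟩
    dsimp only at h1 h2 h3
    simp only [hψ]
    by_cases hA : i = j ∧ c ≤ y k
    · rw [if_pos hA]
      obtain ⟨hij, hck⟩ := hA
      rw [hij, hwj] at h3
      rw [hij] at h1
      have hwk : w k = y k := hwo k (by omega) (by omega) (by omega) (by omega)
      rw [hwk] at h2 h3
      rw [mem_vSet_mk, hyq]
      exact ⟨by omega, by omega, h3⟩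
    rw [if_neg hA]
    by_cases hB : k = q ∧ min i (y i) ≤ a
    · rw [if_pos hB]
      obtain ⟨hkq, -⟩ := hB
      rw [hkq, hwq] at h2 h3
      rw [mem_vSet_mk, hyj]
      refine ⟨by omega, h2, ?_⟩
      by_cases hia : i = a
      · rw [hia, hya]; omega
      by_cases hic : i = c
      · omega
      · rw [← hwo i (by omega) (by omega) hia hic]; exact h3
    · rw [if_neg hB]
      rw [mem_vSet_mk]
      by_cases hkq : k = q
      · have hmin : ¬ min i (y i) ≤ a := fun hh => hB ⟨hkq, hh⟩
        have hm1 := min_le_left i (y i)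
        have hm2 := min_le_right i (y i)
        rw [hkq, hyq]
        exact ⟨by omega, by omega, by omega⟩
      by_cases hkj : k = j
      · rw [hkj, hwj] at h2 h3
        rw [hkj, hyj]
        refine ⟨by omega, by omega, ?_⟩
        by_cases hiq : i = q
        · rw [hiq, hwq] at h3; omega
        by_cases hia : i = a
        · omega
        by_cases hic : i = c
        · omega
        · rw [← hwo i hiq (by omega) hia hic]; omega
      by_cases hka : k = a
      · rw [hka, hwa] at h2; rw [hka] at h1; omega
      by_cases hkc : k = c
      · rw [hkc, hwc] at h2; rw [hkc] at h1; omega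
      · have hwk : w k = y k := hwo k hkq hkj hka hkc
        rw [hwk] at h2 h3
        refine ⟨h1, h2, ?_⟩
        by_cases hij : i = j
        · have : ¬ c ≤ y k := fun hh => hA ⟨hij, hh⟩
          rw [hij, hyj]
          omega
        by_cases hiq : i = q
        · rw [hiq, hwq] at h3; rw [hiq, hyq]; omega
        by_cases hia : i = a
        · rw [hia, hya]; rw [hia] at h2; omega
        by_cases hic : i = c
        · rw [hic, hyc]; rw [hic] at h2; omega
        · rw [← hwo i hiq hij hia hic]; exact h3
  have hinj : Set.InjOn ψ (vSet w) := by
    have key1 : ∀ i k : ℤ, i < k → w k < i → w k < w i → i = q → y k < c := by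
      intro i k g1 g2 g3 giq
      rw [giq, hwq] at g3
      rw [giq] at g1
      have hkj : k ≠ j := by
        intro hkj
        rw [hkj, hwj] at g3
        omega
      have hka : k ≠ a := by omega
      have hkc : k ≠ c := by omega
      have hkq : k ≠ q := by omega
      rw [hwo k hkq hkj hka hkc] at g3
      exact g3
    have key2 : ∀ i k : ℤ, i < k → w k < i → w k < w i → k = j → a < min i (y i) := by
      intro i k g1 g2 g3 gkj
      rw [gkj, hwj] at g2 g3
      have hiq : i ≠ q := by
        intro h
        rw [h, hwq] at g3
        omega
      have hia : i ≠ a := by omega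
      have hic : i ≠ c := by omega
      have hij : i ≠ j := by rw [gkj] at g1; omega
      rw [hwo i hiq hij hia hic] at g3
      have hm1 := lt_min_iff (a := a) (b := i) (c := y i)
      omega
    set χ : ℤ × ℤ → ℤ × ℤ := fun p =>
      if p.1 = q ∧ c ≤ y p.2 then (j, p.2)
      else if p.2 = j ∧ min p.1 (y p.1) ≤ a then (p.1, q)
      else p with hχ
    have hleft : ∀ p ∈ vSet w, χ (ψ p) = p := by
      rintro ⟨i, k⟩ ⟨h1, h2, h3⟩
      dsimp only at h1 h2 h3
      simp only [hψ]
      by_cases hA : i = j ∧ c ≤ y k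
      · rw [if_pos hA]
        simp only [hχ]
        split_ifs with g1 g2
        · rw [hA.1]
        · exact absurd ⟨by trivial, hA.2⟩ g1
        · exact absurd ⟨by trivial, hA.2⟩ g1
      rw [if_neg hA]
      by_cases hB : k = q ∧ min i (y i) ≤ a
      · rw [if_pos hB]
        have hiq : i ≠ q := by rw [hB.1] at h1; omega
        simp only [hχ]
        split_ifs with g1 g2
        · exact absurd g1.1 hiq
        · rw [hB.1]
        · exact absurd ⟨by trivial, hB.2⟩ g2
      · rw [if_neg hB]
        simp only [hχ]
        have hc1 : ¬(i = q ∧ c ≤ y k) := by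
          rintro ⟨e1, e2⟩
          have := key1 i k h1 h2 h3 e1
          omega
        have hc2 : ¬(k = j ∧ min i (y i) ≤ a) := by
          rintro ⟨e1, e2⟩
          have := key2 i k h1 h2 h3 e1
          omega
        rw [if_neg hc1, if_neg hc2]
    intro p1 h1 p2 h2 heq
    rw [← hleft p1 h1, ← hleft p2 h2, heq]
  calc (vSet w).ncard = (ψ '' vSet w).ncard := (Set.ncard_image_of_injOn hinj).symm
    _ ≤ (vSet y).ncard := Set.ncard_le_ncard (Set.image_subset_iff.mpr hmem) hfy
-- ===================== Lemma U2 =====================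

section KeyU2

variable {y w : ℤ → ℤ} {a c q r j : ℤ}

lemma keyU2
    (hyy : ∀ i, y (y i) = i)
    (haq : a < q) (hqr : q < r) (hrj : r < j) (hac : a < c) (hcj : c ≠ j)
    (hyq : y q = a) (hyj : y j = c) (hya : y a = q) (hyc : y c = j)
    (hyr2 : a < y r)
    (hY1 : ∀ i, q < i → i < r → y i < a)
    (hY2 : ∀ k, r < k → y k = r ∨
      (¬(y k < q ∧ y k < y r) ∧ ¬(q < y k ∧ y k < r) ∧ y k ≠ q ∧ y k ≠ r))
    (hY5 : ∀ x, q < x → x < y r → x ≠ r → y x < q)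
    (hwq : w q = c) (hwj : w j = a) (hwa : w a = j) (hwc : w c = q)
    (hwo : ∀ i, i ≠ q → i ≠ j → i ≠ a → i ≠ c → w i = y i)
    (hfw : (vSet w).Finite) :
    (vSet y).ncard + 2 ≤ (vSet w).ncard := by
  have hcq : c ≠ q := by
    intro h
    have h6 := congrArg y h
    rw [hyc, hyq] at h6
    omega
  have hC3 : c = r ∨ c < q ∨ r < c := by
    rcases hY2 j (by omega) with h | ⟨g1, g2, g3, g4⟩
    · rw [hyj] at h; omega
    · rw [hyj] at g2 g3 g4; omega
  have hcyr : c < q → y r < c := by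
    intro h
    have hyrc : y r ≠ c := by
      intro h7
      have h6 := congrArg y h7
      rw [hyy, hyc] at h6
      omega
    rcases hY2 j (by omega) with h7 | ⟨g1, g2, g3, g4⟩
    · rw [hyj] at h7; omega
    · rw [hyj] at g1
      omega
  have hjyr : r < c → y r < j := by
    intro h
    by_contra hc
    push_neg at hc
    have hyrj : y r ≠ j := by
      intro h7
      have h6 := congrArg y h7
      rw [hyy, hyj] at h6
      omega
    have h6 : j < y r := by omega
    have := hY5 j (by omega) h6 (by omega)
    rw [hyj] at this
    omega
  -- the injection G
  set G : ℤ × ℤ → ℤ × ℤ := fun p =>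
    if p.2 = q ∧ min p.1 (y p.1) ≤ c then (p.1, j)
    else if p.1 = j ∧ a ≤ y p.2 then (if y p.2 < q then (q, p.2) else (y p.2, j))
    else if p.1 = c ∧ min c q ≤ y p.2 then (if p.2 < j then (p.2, j) else (y p.2, c))
    else p with hGdef
  have hGuv : ∀ u v : ℤ, G (u, v) =
      if v = q ∧ min u (y u) ≤ c then (u, j)
      else if u = j ∧ a ≤ y v then (if y v < q then (q, v) else (y v, j))
      else if u = c ∧ min c q ≤ y v then (if v < j then (v, j) else (y v, c))
      else (u, v) := fun u v => rfl
  -- ============ membership ============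
  have hG1 : ∀ p ∈ vSet y, G p ∈ vSet w := by
    rintro ⟨i, k⟩ ⟨h1, h2, h3⟩
    dsimp only at h1 h2 h3
    rw [hGuv]
    by_cases hR1 : k = q ∧ min i (y i) ≤ c
    · rw [if_pos hR1]
      rw [hR1.1, hyq] at h2 h3
      rw [mem_vSet_mk, hwj]
      have h1' : i < q := by rw [hR1.1] at h1; exact h1
      refine ⟨by omega, by omega, ?_⟩
      by_cases hia : i = a
      · omega
      by_cases hic : i = c
      · rw [hic, hwc]; omega
      · rw [hwo i (by omega) (by omega) hia hic]; omega
    rw [if_neg hR1]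
    by_cases hR2 : i = j ∧ a ≤ y k
    · rw [if_pos hR2]
      rw [hR2.1, hyj] at h3
      rw [hR2.1] at h1 h2
      have hkc : k ≠ c := by
        intro h
        rw [h, hyc] at h2
        omega
      by_cases hsub : y k < q
      · rw [if_pos hsub]
        rw [mem_vSet_mk, hwq]
        have hwk : w k = y k := hwo k (by omega) (by omega) (by omega) hkc
        rw [hwk]
        exact ⟨by omega, hsub, h3⟩
      · rw [if_neg hsub]
        push_neg at hsub
        have hykr : r < y k := by
          rcases hY2 k (by omega) with h | ⟨g1, g2, g3, g4⟩
          · exfalso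
            have h6 := congrArg y h
            rw [hyy] at h6
            have hrc : r < c := by omega
            have := hjyr hrc
            omega
          · omega
        rw [mem_vSet_mk, hwj]
        have hykS : w (y k) = y (y k) :=
          hwo (y k) (by omega) (by omega) (by omega) (by omega)
        rw [hykS, hyy]
        exact ⟨by omega, by omega, by omega⟩
    rw [if_neg hR2]
    by_cases hR3 : i = c ∧ min c q ≤ y k
    · rw [if_pos hR3]
      rw [hR3.1, hyc] at h3
      rw [hR3.1] at h1 h2
      have hmin := hR3.2
      have hrc : r < c := by
        rcases hC3 with h | h | h
        · exfalso
          rcases hY2 k (by omega) with h7 | ⟨g1, g2, g3, g4⟩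
          · omega
          · have : min c q = q := by rw [h]; exact min_eq_right (by omega)
            omega
        · exfalso
          have : min c q = c := min_eq_left (by omega)
          omega
        · exact h
      have hminq : min c q = q := min_eq_right (by omega)
      have hykr : r < y k := by
        rcases hY2 k (by omega) with h | ⟨g1, g2, g3, g4⟩
        · exfalso
          have h6 := congrArg y h
          rw [hyy] at h6
          have := hY5 c (by omega) (by omega) (by omega)
          rw [hyc] at this
          omega
        · omega
      have hkj : k ≠ j := by
        intro h
        rw [h, hyj] at h2
        omega
      by_cases hsub : k < j
      · rw [if_pos hsub]
        rw [mem_vSet_mk, hwj]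
        have hwk : w k = y k := hwo k (by omega) hkj (by omega) (by omega)
        rw [hwk]
        exact ⟨hsub, by omega, by omega⟩
      · rw [if_neg hsub]
        push_neg at hsub
        rw [mem_vSet_mk, hwc]
        have hykS : w (y k) = y (y k) :=
          hwo (y k) (by omega) (by omega) (by omega) (by omega)
        rw [hykS, hyy]
        exact ⟨by omega, by omega, by omega⟩
    rw [if_neg hR3]
    -- identity case
    rw [mem_vSet_mk]
    by_cases hkq : k = q
    · have hnm : ¬ min i (y i) ≤ c := fun hh => hR1 ⟨hkq, hh⟩
      have hm1 := min_le_left i (y i)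
      have hm2 := min_le_right i (y i)
      rw [hkq] at h1 h2 h3
      rw [hkq, hwq]
      rw [hyq] at h3
      refine ⟨by omega, by omega, ?_⟩
      by_cases hia : i = a
      · omega
      by_cases hic : i = c
      · omega
      · rw [hwo i (by omega) (by omega) hia hic]; omega
    by_cases hkj : k = j
    · rw [hkj] at h1 h2 h3
      rw [hkj, hwj]
      rw [hyj] at h2 h3
      have hiq : i ≠ q := by
        intro h
        rw [h, hyq] at h3
        omega
      have hia : i ≠ a := by omega
      have hic : i ≠ c := by omega
      rw [hwo i hiq (by omega) hia hic]
      exact ⟨by omega, by omega, by omega⟩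
    by_cases hka : k = a
    · rw [hka, hya] at h2
      rw [hka] at h1
      omega
    by_cases hkc : k = c
    · rw [hkc] at h1 h2 h3
      rw [hkc, hwc]
      rw [hyc] at h2 h3
      have hiq : i ≠ q := by omega
      have hia : i ≠ a := by omega
      rw [hwo i hiq (by omega) hia (by omega)]
      exact ⟨by omega, by omega, by omega⟩
    · have hwk : w k = y k := hwo k hkq hkj hka hkc
      rw [hwk]
      refine ⟨h1, h2, ?_⟩
      by_cases hiq : i = q
      · rw [hiq, hyq] at h3
        rw [hiq, hwq]
        omega
      by_cases hij : i = j
      · have : ¬ a ≤ y k := fun hh => hR2 ⟨hij, hh⟩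
        rw [hij, hwj]
        omega
      by_cases hia : i = a
      · rw [hia] at h2
        rw [hia, hwa]
        omega
      by_cases hic : i = c
      · have : ¬ min c q ≤ y k := fun hh => hR3 ⟨hic, hh⟩
        have hm1 := min_le_left c q
        have hm2 := min_le_right c q
        have hm3 := le_min_iff (a := y k) (b := c) (c := q)
        rw [hic, hwc]
        omega
      · rw [hwo i hiq hij hia hic]
        exact h3
  -- ============ injectivity via left inverse ============
  have hG2 : Set.InjOn G (vSet y) := by
    set H : ℤ × ℤ → ℤ × ℤ := fun p =>
      if p.2 = j ∧ p.1 < q ∧ min p.1 (y p.1) ≤ c then (p.1, q)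
      else if p.2 = j ∧ q < p.1 ∧ p.1 < c then (j, y p.1)
      else if p.2 = j ∧ c < p.1 ∧ p.1 < j ∧ y p.1 ≤ c then (c, p.1)
      else if p.1 = q ∧ a ≤ y p.2 then (j, p.2)
      else if p.2 = c ∧ p.1 < j then (c, y p.1)
      else p with hHdef
    have hHuv : ∀ u v : ℤ, H (u, v) =
      if v = j ∧ u < q ∧ min u (y u) ≤ c then (u, q)
      else if v = j ∧ q < u ∧ u < c then (j, y u)
      else if v = j ∧ c < u ∧ u < j ∧ y u ≤ c then (c, u)
      else if u = q ∧ a ≤ y v then (j, v)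
      else if v = c ∧ u < j then (c, y u)
      else (u, v) := fun u v => rfl
    have hleft : ∀ p ∈ vSet y, H (G p) = p := by
      rintro ⟨i, k⟩ ⟨h1, h2, h3⟩
      dsimp only at h1 h2 h3
      rw [hGuv]
      by_cases hR1 : k = q ∧ min i (y i) ≤ c
      · rw [if_pos hR1, hHuv]
        have h1' : i < q := by rw [hR1.1] at h1; exact h1
        rw [if_pos ⟨rfl, h1', hR1.2⟩, hR1.1]
      rw [if_neg hR1]
      by_cases hR2 : i = j ∧ a ≤ y k
      · rw [if_pos hR2]
        rw [hR2.1, hyj] at h3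
        rw [hR2.1] at h1 h2
        have hkc : k ≠ c := by
          intro h
          rw [h, hyc] at h2
          omega
        have hkj : k ≠ j := by omega
        by_cases hsub : y k < q
        · rw [if_pos hsub, hHuv]
          rw [if_neg (by rintro ⟨e, -⟩; exact hkj e),
            if_neg (by rintro ⟨e, -⟩; exact hkj e),
            if_neg (by rintro ⟨e, -⟩; exact hkj e),
            if_pos ⟨rfl, hR2.2⟩, hR2.1]
        · rw [if_neg hsub]
          push_neg at hsub
          have hykq : q < y k := by
            rcases lt_or_eq_of_le hsub with h | h
            · exact h
            · exfalso
              have h6 := congrArg y h.symm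
              rw [hyy, hyq] at h6
              omega
          rw [hHuv]
          rw [if_neg (by rintro ⟨-, e, -⟩; omega),
            if_pos ⟨rfl, hykq, h3⟩, hyy, hR2.1]
      rw [if_neg hR2]
      by_cases hR3 : i = c ∧ min c q ≤ y k
      · rw [if_pos hR3]
        rw [hR3.1, hyc] at h3
        rw [hR3.1] at h1 h2
        have hmin := hR3.2
        have hrc : r < c := by
          rcases hC3 with h | h | h
          · exfalso
            rcases hY2 k (by omega) with h7 | ⟨g1, g2, g3, g4⟩
            · omega
            · have : min c q = q := by rw [h]; exact min_eq_right (by omega)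
              omega
          · exfalso
            have : min c q = c := min_eq_left (by omega)
            omega
          · exact h
        have hminq : min c q = q := min_eq_right (by omega)
        have hykr : r < y k := by
          rcases hY2 k (by omega) with h | ⟨g1, g2, g3, g4⟩
          · exfalso
            have h6 := congrArg y h
            rw [hyy] at h6
            have := hY5 c (by omega) (by omega) (by omega)
            rw [hyc] at this
            omega
          · omega
        have hkj : k ≠ j := by
          intro h
          rw [h, hyj] at h2
          omega
        by_cases hsub : k < j
        · rw [if_pos hsub, hHuv]
          rw [if_neg (by rintro ⟨-, e, -⟩; omega),
            if_neg (by rintro ⟨-, -, e⟩; omega),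
            if_pos ⟨rfl, by omega, hsub, by omega⟩, hR3.1]
        · rw [if_neg hsub]
          push_neg at hsub
          rw [hHuv]
          rw [if_neg (by rintro ⟨e, -⟩; exact hcj e),
            if_neg (by rintro ⟨e, -⟩; exact hcj e),
            if_neg (by rintro ⟨e, -⟩; exact hcj e),
            if_neg (by rintro ⟨e, -⟩; omega),
            if_pos ⟨rfl, by omega⟩, hyy, hR3.1]
      rw [if_neg hR3, hHuv]
      -- identity
      rw [if_neg (by
          rintro ⟨e, f, g⟩
          rw [e, hyj] at h2 h3
          have hm1 := min_le_left i (y i)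
          have hm2 := min_le_right i (y i)
          omega),
        if_neg (by
          rintro ⟨e, f, g⟩
          rw [e, hyj] at h2
          omega),
        if_neg (by
          rintro ⟨e, f, g, g2⟩
          rw [e, hyj] at h3
          omega),
        if_neg (by
          rintro ⟨e, f⟩
          rw [e, hyq] at h3
          omega),
        if_neg (by
          rintro ⟨e, f⟩
          rw [e, hyc] at h2
          omega)]
    intro p1 h1 p2 h2 heq
    rw [← hleft p1 h1, ← hleft p2 h2, heq]
  -- ============ the two reserved pairs ============
  have hres1 : (q, j) ∈ vSet w := by
    rw [mem_vSet_mk, hwj, hwq]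
    exact ⟨by omega, by omega, hac⟩
  have hres2 : (r, j) ∈ vSet w := by
    rw [mem_vSet_mk, hwj]
    refine ⟨by omega, by omega, ?_⟩
    by_cases hrc : r = c
    · rw [hrc, hwc]; omega
    · rw [hwo r (by omega) (by omega) (by omega) hrc]
      omega
  have hres1' : (q, j) ∉ G '' vSet y := by
    rintro ⟨⟨i, k⟩, hmem, heq⟩
    rw [mem_vSet_mk] at hmem
    obtain ⟨h1, h2, h3⟩ := hmem
    rw [hGuv] at heq
    by_cases hR1 : k = q ∧ min i (y i) ≤ c
    · rw [if_pos hR1] at heq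
      simp only [Prod.mk.injEq] at heq
      rw [hR1.1] at h1
      omega
    rw [if_neg hR1] at heq
    by_cases hR2 : i = j ∧ a ≤ y k
    · rw [if_pos hR2] at heq
      by_cases hsub : y k < q
      · rw [if_pos hsub] at heq
        simp only [Prod.mk.injEq] at heq
        rw [hR2.1] at h1
        omega
      · rw [if_neg hsub] at heq
        simp only [Prod.mk.injEq] at heq
        push_neg at hsub
        obtain ⟨e1, -⟩ := heq
        have h6 := congrArg y e1
        rw [hyy, hyq] at h6
        rw [hR2.1] at h1
        omega
    rw [if_neg hR2] at heq
    by_cases hR3 : i = c ∧ min c q ≤ y k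
    · rw [if_pos hR3] at heq
      by_cases hsub : k < j
      · rw [if_pos hsub] at heq
        simp only [Prod.mk.injEq] at heq
        rw [hR3.1] at h1
        obtain ⟨e1, -⟩ := heq
        have h9 := hR3.2
        rw [e1, hyq] at h9
        have hmc : min c q = c := min_eq_left (by omega)
        omega
      · rw [if_neg hsub] at heq
        simp only [Prod.mk.injEq] at heq
        exact hcj heq.2
    rw [if_neg hR3] at heq
    simp only [Prod.mk.injEq] at heq
    obtain ⟨e1, e2⟩ := heq
    rw [e1, e2, hyj] at h3
    rw [hyq] at h3
    omega
  have hres2' : (r, j) ∉ G '' vSet y := by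
    rintro ⟨⟨i, k⟩, hmem, heq⟩
    rw [mem_vSet_mk] at hmem
    obtain ⟨h1, h2, h3⟩ := hmem
    rw [hGuv] at heq
    by_cases hR1 : k = q ∧ min i (y i) ≤ c
    · rw [if_pos hR1] at heq
      simp only [Prod.mk.injEq] at heq
      rw [hR1.1] at h1
      omega
    rw [if_neg hR1] at heq
    by_cases hR2 : i = j ∧ a ≤ y k
    · rw [if_pos hR2] at heq
      by_cases hsub : y k < q
      · rw [if_pos hsub] at heq
        simp only [Prod.mk.injEq] at heq
        omega
      · rw [if_neg hsub] at heq
        simp only [Prod.mk.injEq] at heq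
        obtain ⟨e1, -⟩ := heq
        have h6 := congrArg y e1
        rw [hyy] at h6
        rw [hR2.1] at h1 h2
        rw [hR2.1, hyj] at h3
        have hrc : r < c := by omega
        have := hjyr hrc
        omega
    rw [if_neg hR2] at heq
    by_cases hR3 : i = c ∧ min c q ≤ y k
    · rw [if_pos hR3] at heq
      rw [hR3.1] at h1 h2
      rw [hR3.1, hyc] at h3
      have hrc : r < c := by
        rcases hC3 with h | h | h
        · exfalso
          rcases hY2 k (by omega) with h7 | ⟨g1, g2, g3, g4⟩
          · omega
          · have : min c q = q := by rw [h]; exact min_eq_right (by omega)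
            have := hR3.2
            omega
        · exfalso
          have : min c q = c := min_eq_left (by omega)
          have := hR3.2
          omega
        · exact h
      by_cases hsub : k < j
      · rw [if_pos hsub] at heq
        simp only [Prod.mk.injEq] at heq
        omega
      · rw [if_neg hsub] at heq
        simp only [Prod.mk.injEq] at heq
        exact hcj heq.2
    rw [if_neg hR3] at heq
    simp only [Prod.mk.injEq] at heq
    obtain ⟨e1, e2⟩ := heq
    rw [e2, hyj] at h2 h3
    rw [e1] at h2 h3
    rcases hC3 with h | h | h
    · omega
    · have := hcyr h
      omega
    · omega
  -- ============ conclude ============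
  have hfin : (G '' vSet y).Finite :=
    hfw.subset (Set.image_subset_iff.mpr hG1)
  have hsub : insert (q, j) (insert (r, j) (G '' vSet y)) ⊆ vSet w := by
    intro p hp
    rcases Set.mem_insert_iff.mp hp with h | h
    · rw [h]; exact hres1
    rcases Set.mem_insert_iff.mp h with h | h
    · rw [h]; exact hres2
    · obtain ⟨p', hp', he⟩ := h
      rw [← he]
      exact hG1 p' hp'
  have hqj_ne : (q, j) ∉ insert (r, j) (G '' vSet y) := by
    intro hmem
    rcases Set.mem_insert_iff.mp hmem with h | h
    · simp only [Prod.mk.injEq] at h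
      omega
    · exact hres1' h
  have hcount : (insert (q, j) (insert (r, j) (G '' vSet y))).ncard =
      (G '' vSet y).ncard + 2 := by
    rw [Set.ncard_insert_of_notMem hqj_ne (hfin.insert _),
      Set.ncard_insert_of_notMem hres2' hfin]
  have hle := Set.ncard_le_ncard hsub hfw
  rw [hcount, Set.ncard_image_of_injOn hG2] at hle
  omega

end KeyU2
-- ===================== FZ closed under conjugation =====================

lemma conj_mem_FZ {z : Equiv.Perm ℤ} (hz : z ∈ FZ) (u v : ℤ) :
    Equiv.swap u v * z * Equiv.swap u v ∈ FZ := by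
  obtain ⟨h1, h2, h3⟩ := hz
  have hzz : ∀ i, z (z i) = i := fz_invol ⟨h1, h2, h3⟩
  refine ⟨?_, ?_, ?_⟩
  · have e : ∀ g : Equiv.Perm ℤ, z * (z * g) = g := fun g => by
      rw [← mul_assoc, h1, one_mul]
    simp only [mul_assoc]
    rw [Equiv.swap_mul_self_mul, e, Equiv.swap_mul_self]
  · intro i hc
    have hc2 : Equiv.swap u v (z (Equiv.swap u v i)) = i := hc
    have hc3 := congrArg (Equiv.swap u v) hc2
    rw [Equiv.swap_apply_self] at hc3
    exact h2 (Equiv.swap u v i) hc3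
  · apply Set.Finite.subset (h3.union (Set.toFinite {u, v, z u, z v}))
    intro i hi
    simp only [Set.mem_setOf_eq] at hi
    by_cases hmem : i ∈ ({u, v, z u, z v} : Set ℤ)
    · exact Or.inr hmem
    · simp only [Set.mem_insert_iff, Set.mem_singleton_iff] at hmem
      push_neg at hmem
      obtain ⟨e1, e2, e3, e4⟩ := hmem
      left
      simp only [Set.mem_setOf_eq]
      intro hc
      apply hi
      have hsi : Equiv.swap u v i = i := Equiv.swap_apply_of_ne_of_ne e1 e2
      have hziu : z i ≠ u := by
        intro h
        have := congrArg z h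
        rw [hzz] at this
        exact e3 this
      have hziv : z i ≠ v := by
        intro h
        have := congrArg z h
        rw [hzz] at this
        exact e4 this
      have : (Equiv.swap u v * z * Equiv.swap u v) i = Equiv.swap u v (z i) := by
        have : (Equiv.swap u v * z * Equiv.swap u v) i = Equiv.swap u v (z (Equiv.swap u v i)) :=
          rfl
        rw [this, hsi]
      rw [this, Equiv.swap_apply_of_ne_of_ne hziu hziv]
      exact hc

end AuxFpf


open AuxFpf in
/-- if `(q,r)` is the lexicographically maximal FPF-visible inversion of
`z ∈ F_ℤ - {Θ}` and `η_FPF(z) = (q,r) z (q,r)`, then `Ψ̂⁺(η_FPF(z), q) = {z}`. -/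
theorem psiPlus_eta_eq_singleton (z : Equiv.Perm ℤ) (hz : z ∈ FZ) (hzT : z ≠ Theta)
    (q r : ℤ) (hqr : IsMaxVisInv z q r) :
    PsiPlus (Equiv.swap q r * z * Equiv.swap q r) q = {z} := by
  obtain ⟨hvis, hmax⟩ := hqr
  rw [fpfVisInv_iff] at hvis
  obtain ⟨hqr', har, hab'⟩ := hvis
  have hzz : ∀ i, z (z i) = i := fz_invol hz
  have hzfpf : ∀ i, z i ≠ i := hz.2.1
  set a : ℤ := z r with hadef
  set b : ℤ := z q with hbdef
  have haq : a < q := har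
  have hab : a < b := hab'
  have hzr : z r = a := rfl
  have hzq : z q = b := rfl
  have hza : z a = r := by rw [hadef, hzz]
  have hzb : z b = q := by rw [hbdef, hzz]
  have hM : ∀ i k, i < k → z k < i → z k < z i → i < q ∨ (i = q ∧ k ≤ r) := by
    intro i k h1 h2 h3
    exact hmax i k (fpfVisInv_iff.mpr ⟨h1, h2, h3⟩)
  -- basic distinctness
  have hbq : b ≠ q := by intro h; apply hzfpf q; rw [hzq, h]
  have hbr : b ≠ r := by
    intro h; rw [h] at hzb; rw [hzr] at hzb; omega
  have hba : b ≠ a := by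
    intro h; rw [h] at hzb; rw [hza] at hzb; omega
  have hM1 : ∀ i, q < i → i < r → z i < a := by
    intro i h1 h2
    by_contra hc
    push_neg at hc
    have hne : z i ≠ a := by
      intro h
      have h5 := congrArg z h
      rw [hzz, hza] at h5
      omega
    have h6 := hM i r h2 (by omega) (by rw [hzr]; omega)
    omega
  have hM4 : b < q ∨ r < b := by
    rcases lt_trichotomy b q with h | h | h
    · exact Or.inl h
    · exact absurd h hbq
    rcases lt_trichotomy b r with h2 | h2 | h2
    · have := hM1 b h h2
      rw [hzb] at this
      omega
    · exact absurd h2 hbr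
    · exact Or.inr h2
  have hM2 : ∀ k, r < k → ¬(z k < q ∧ z k < b) := by
    rintro k hk ⟨c1, c2⟩
    have h6 := hM q k (by omega) c1 (by rw [hzq]; exact c2)
    omega
  have hM3 : ∀ k, r < k → ¬(q < z k ∧ z k < r) := by
    rintro k hk ⟨c1, c2⟩
    have h6 := hM (z k) r c2 (by rw [hzr]; omega) (by rw [hzr, hzz]; omega)
    omega
  have hM5 : ∀ x, q < x → x < b → z x < q := by
    intro x h1 h2
    have hne : z x ≠ q := by
      intro h
      have h5 := congrArg z h
      rw [hzz, hzq] at h5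
      omega
    by_contra hc
    push_neg at hc
    have h6 := hM x b h2 (by rw [hzb]; exact h1) (by rw [hzb]; omega)
    omega
  -- the permutation y
  set s : Equiv.Perm ℤ := Equiv.swap q r with hsdef
  set y : Equiv.Perm ℤ := s * z * s with hydef
  have hyFZ : y ∈ FZ := conj_mem_FZ hz q r
  have hyy : ∀ i, y (y i) = i := fz_invol hyFZ
  have hyfpf : ∀ i, y i ≠ i := hyFZ.2.1
  have hyapp : ∀ i, y i = s (z (s i)) := fun i => rfl
  have hsq : s q = r := Equiv.swap_apply_left q r
  have hsr : s r = q := Equiv.swap_apply_right q r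
  have hso : ∀ i, i ≠ q → i ≠ r → s i = i := fun i h1 h2 =>
    Equiv.swap_apply_of_ne_of_ne h1 h2
  have hyq : y q = a := by
    rw [hyapp, hsq, hzr, hso a (by omega) (by omega)]
  have hyr : y r = b := by
    rw [hyapp, hsr, hzq, hso b hbq hbr]
  have hya : y a = q := by
    rw [hyapp, hso a (by omega) (by omega), hza, hsr]
  have hyb : y b = r := by
    rw [hyapp, hso b hbq hbr, hzb, hsq]
  have hyo : ∀ i, i ≠ q → i ≠ r → i ≠ a → i ≠ b → y i = z i := by
    intro i h1 h2 h3 h4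
    rw [hyapp, hso i h1 h2]
    apply hso
    · intro h
      apply h4
      rw [← hzz i, h, hzq]
    · intro h
      apply h3
      rw [← hzz i, h, hzr]
  have hfy : (vSet ⇑y).Finite := vSet_finite hyFZ
  have hfz : (vSet ⇑z).Finite := vSet_finite hz
  -- key length relation
  have hBcard : (vSet ⇑z).ncard = (vSet ⇑y).ncard + 1 :=
    keyB_ncard hzz hzfpf haq hqr' hab hzr hzq hM hyq hyr hya hyb hyo hfy
  have hlenz : fpfLen z = (vSet ⇑z).ncard := fpfLen_eq_ncard_vSet hz
  have hleny : fpfLen y = (vSet ⇑y).ncard := fpfLen_eq_ncard_vSet hyFZ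
  -- the "conjugate back" identity
  have hback : s * y * s = z := by
    rw [hydef]
    simp only [mul_assoc]
    rw [Equiv.swap_mul_self, mul_one, ← mul_assoc, Equiv.swap_mul_self, one_mul]
  -- conclude
  ext w
  simp only [PsiPlus, Set.mem_setOf_eq, Set.mem_singleton_iff]
  constructor
  · rintro ⟨hwFZ, hwlen, jj, hjq, hweq⟩
    by_cases hjr : jj = r
    · rw [hjr] at hweq
      rw [hweq]
      exact hback
    · exfalso
      have hwfpf : ∀ i, w i ≠ i := hwFZ.2.1
      set t : Equiv.Perm ℤ := Equiv.swap q jj with htdef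
      have hwapp : ∀ i, w i = t (y (t i)) := by
        intro i
        rw [hweq]
        rfl
      have htq : t q = jj := Equiv.swap_apply_left q jj
      have htj : t jj = q := Equiv.swap_apply_right q jj
      have hto : ∀ i, i ≠ q → i ≠ jj → t i = i := fun i h1 h2 =>
        Equiv.swap_apply_of_ne_of_ne h1 h2
      set c : ℤ := y jj with hcdef
      have hyjj : y jj = c := rfl
      have hcjj : c ≠ jj := by
        intro h
        exact hyfpf jj (by rw [hyjj, h])
      have hcq : c ≠ q := by
        intro h
        have h6 := congrArg y h.symm
        rw [hyq, hcdef, hyy] at h6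
        omega
      have hyc : y c = jj := by rw [hcdef, hyy]
      have hwq : w q = c := by
        rw [hwapp, htq, hyjj, hto c hcq hcjj]
      have hwj : w jj = a := by
        rw [hwapp, htj, hyq, hto a (by omega) (by omega)]
      have hwa : w a = jj := by
        rw [hwapp, hto a (by omega) (by omega), hya, htq]
      have hwc : w c = q := by
        rw [hwapp, hto c hcq hcjj, hyc, htj]
      have hwo : ∀ i, i ≠ q → i ≠ jj → i ≠ a → i ≠ c → w i = y i := by
        intro i h1 h2 h3 h4
        rw [hwapp, hto i h1 h2]
        apply hto
        · intro h
          apply h3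
          rw [← hyy i, h, hyq]
        · intro h
          apply h4
          rw [← hyy i, h, hyjj]
      have hfw : (vSet ⇑w).Finite := vSet_finite hwFZ
      have hwcard : (vSet ⇑w).ncard = (vSet ⇑y).ncard + 1 := by
        have := fpfLen_eq_ncard_vSet hwFZ
        omega
      rcases lt_trichotomy jj r with hjlt | hjeq | hjgt
      · -- q < jj < r : use keyU1
        have hjb : jj ≠ b := by rcases hM4 with h | h <;> omega
        have hcz : c = z jj := by
          rw [hcdef, hyo jj (by omega) hjr (by omega) hjb]
        have hca : c < a := by
          rw [hcz]
          exact hM1 jj hjq hjlt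
        have := keyU1 hca haq hjq hyq hyjj hya hyc hwq hwj hwa hwc hwo hfy
        omega
      · exact hjr hjeq
      · -- r < jj : use keyU2
        have hac : a < c := by
          by_cases hjb : jj = b
          · rw [hcdef, hjb, hyb]
            omega
          · have hcz : c = z jj := by
              rw [hcdef, hyo jj (by omega) hjr (by omega) hjb]
            have := hM2 jj hjgt
            rw [hcz]
            omega
        have hY1 : ∀ i, q < i → i < r → (y : ℤ → ℤ) i < a := by
          intro i h1 h2
          have hia : i ≠ a := by omega
          have hib : i ≠ b := by rcases hM4 with h | h <;> omega
          rw [hyo i (by omega) (by omega) hia hib]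
          exact hM1 i h1 h2
        have hY2 : ∀ k, r < k → (y : ℤ → ℤ) k = r ∨
            (¬((y : ℤ → ℤ) k < q ∧ (y : ℤ → ℤ) k < (y : ℤ → ℤ) r) ∧
              ¬(q < (y : ℤ → ℤ) k ∧ (y : ℤ → ℤ) k < r) ∧
              (y : ℤ → ℤ) k ≠ q ∧ (y : ℤ → ℤ) k ≠ r) := by
          intro k hk
          by_cases hkb : k = b
          · left
            rw [hkb, hyb]
          · right
            have hkz : (y : ℤ → ℤ) k = z k := by
              apply hyo k (by omega) (by omega) (by omega) hkb
            have hzkq : z k ≠ q := by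
              intro h
              have h5 := congrArg z h
              rw [hzz, hzq] at h5
              exact hkb h5
            have hzkr : z k ≠ r := by
              intro h
              have h5 := congrArg z h
              rw [hzz, hzr] at h5
              omega
            rw [hkz, hyr]
            exact ⟨hM2 k hk, hM3 k hk, hzkq, hzkr⟩
        have hY5 : ∀ x, q < x → x < (y : ℤ → ℤ) r → x ≠ r → (y : ℤ → ℤ) x < q := by
          intro x h1 h2 h3
          rw [hyr] at h2
          have hxa : x ≠ a := by omega
          have hxb : x ≠ b := by omega
          rw [hyo x (by omega) h3 hxa hxb]
          exact hM5 x h1 h2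
        have hyr2 : a < (y : ℤ → ℤ) r := by rw [hyr]; omega
        have := keyU2 hyy haq hqr' hjgt hac hcjj hyq hyjj hya hyc hyr2 hY1 hY2 hY5
          hwq hwj hwa hwc hwo hfw
        omega
  · intro hwz
    rw [hwz]
    refine ⟨hz, by omega, r, hqr', ?_⟩
    rw [hback]
end
end

section
/- Let z ∈ F_ℤ with z ≠ Θ, and suppose (i,j) ∈ Cyc_ℤ(z) is the cycle with j minimal such that i < b < j for some (a,b) ∈ Cyc_ℤ(z). Then j − 1 is the minimal visible descent of I(z). -/
open Equiv

noncomputable section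

/-- let `z ∈ F_ℤ - {Θ}` and let `(i,j) ∈ Cyc_ℤ(z)` be the cycle with `j`
minimal such that `i < b < j` for some `(a,b) ∈ Cyc_ℤ(z)`. Then `j - 1` is the minimal
visible descent of `I(z)`. -/
theorem min_visDes_Imap (z : Equiv.Perm ℤ) (hz : z ∈ FZ) (hzT : z ≠ Theta)
    (i j : ℤ) (hij : i < j ∧ z i = j)
    (hb : ∃ a b : ℤ, a < b ∧ z a = b ∧ i < b ∧ b < j)
    (hmin : ∀ i' j' : ℤ, i' < j' → z i' = j' →
      (∃ a b : ℤ, a < b ∧ z a = b ∧ i' < b ∧ b < j') → j ≤ j') :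
    IsLeast {d : ℤ | VisDes (Imap z) d} (j - 1) := by
  obtain ⟨hzz, hfpf, hfin⟩ := hz
  have hinv : ∀ x, z (z x) = x := by
    intro x
    have := congrArg (fun p => p x) hzz
    simpa [Equiv.Perm.mul_apply] using this
  obtain ⟨hijlt, hzi⟩ := hij
  have hzj : z j = i := by rw [← hzi, hinv]
  constructor
  · show VisDes (Imap z) (j - 1)
    have h1 : Imap z (j - 1 + 1) = i := by
      have hjj : j - 1 + 1 = j := by ring
      rw [hjj]
      unfold Imap
      rw [if_pos, hzj]
      obtain ⟨a, b, hab, hzab, hib, hbj⟩ := hb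
      exact ⟨a, b, hab, hzab, by rw [hzj]; omega, by rw [hzj]; omega⟩
    have h2 : i ≤ Imap z (j - 1) := by
      by_cases hc : ∃ a b : ℤ, a < b ∧ z a = b ∧ min (j-1) (z (j-1)) < b ∧ b < max (j-1) (z (j-1))
      · have hI : Imap z (j-1) = z (j-1) := by unfold Imap; rw [if_pos hc]
        rw [hI]
        by_contra hlt
        push_neg at hlt
        obtain ⟨a, b, hab, hzab, hb1, hb2⟩ := hc
        have := hmin (z (j-1)) (j-1) (by omega) (hinv (j-1)) ⟨a, b, hab, hzab, by omega, by omega⟩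
        omega
      · have hI : Imap z (j-1) = j-1 := by unfold Imap; rw [if_neg hc]
        omega
    show Imap z (j - 1 + 1) ≤ min (j-1) (Imap z (j-1))
    rw [h1]
    omega
  · intro d hd
    by_contra hlt
    push_neg at hlt
    have hvd : Imap z (d + 1) ≤ min d (Imap z d) := hd
    by_cases hc : ∃ a b : ℤ, a < b ∧ z a = b ∧ min (d+1) (z (d+1)) < b ∧ b < max (d+1) (z (d+1))
    · have hI : Imap z (d+1) = z (d+1) := by unfold Imap; rw [if_pos hc]
      rw [hI] at hvd
      have hle : z (d+1) ≤ d := le_trans hvd (min_le_left _ _)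
      obtain ⟨a, b, hab, hzab, h1, h2⟩ := hc
      have := hmin (z (d+1)) (d+1) (by omega) (hinv (d+1)) ⟨a, b, hab, hzab, by omega, by omega⟩
      omega
    · have hI : Imap z (d+1) = d+1 := by unfold Imap; rw [if_neg hc]
      rw [hI] at hvd
      have := min_le_left d (Imap z d)
      omega
end
end

section
/- Let z ∈ F_ℤ and i ∈ ℤ. Then i is a visible descent of I(z) if and only if one of the following holds: (a) z(i+1) < z(i) < i; (b) z(i) < z(i+1) < i and {t ∈ ℤ : z(i) < t < i} ⊆ {z(t) : t > i}; (c) z(i+1) < i < z(i) and {t ∈ ℤ : z(i+1) < t < i+1} is not contained in {z(t) : t > i+1}. -/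
open Equiv

noncomputable section

/-- characterization of the visible descents of `I(z)` for `z ∈ F_ℤ`. -/
theorem visDes_Imap_iff (z : Equiv.Perm ℤ) (hz : z ∈ FZ) (i : ℤ) :
    VisDes (Imap z) i ↔
      ((z (i + 1) < z i ∧ z i < i) ∨
        (z i < z (i + 1) ∧ z (i + 1) < i ∧
          ∀ t : ℤ, z i < t → t < i → ∃ u : ℤ, i < u ∧ z u = t) ∨
        (z (i + 1) < i ∧ i < z i ∧
          ¬ ∀ t : ℤ, z (i + 1) < t → t < i + 1 → ∃ u : ℤ, i + 1 < u ∧ z u = t)) := by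
  obtain ⟨hmul, hne, -⟩ := hz
  have hzz : ∀ x, z (z x) = x := by
    intro x
    have h := congrArg (fun p : Equiv.Perm ℤ => p x) hmul
    simpa [Equiv.Perm.mul_apply] using h
  have hCpos : ∀ j : ℤ, (∃ t : ℤ, min j (z j) < t ∧ t < max j (z j) ∧ z t < t) →
      Imap z j = z j := by
    intro j h
    obtain ⟨t, h1, h2, h3⟩ := h
    have hc : ∃ a b : ℤ, a < b ∧ z a = b ∧ min j (z j) < b ∧ b < max j (z j) :=
      ⟨z t, t, h3, hzz t, h1, h2⟩
    unfold Imap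
    rw [if_pos hc]
  have hCneg : ∀ j : ℤ, (¬ ∃ t : ℤ, min j (z j) < t ∧ t < max j (z j) ∧ z t < t) →
      Imap z j = j := by
    intro j h
    unfold Imap
    rw [if_neg]
    rintro ⟨p, q, hpq, hzp, h1, h2⟩
    refine h ⟨q, h1, h2, ?_⟩
    have hq : z q = p := by rw [← hzp, hzz]
    omega
  have hval : ∀ j : ℤ, Imap z j = z j ∨ Imap z j = j := by
    intro j
    unfold Imap
    split_ifs <;> simp
  have hex : ∀ c t : ℤ, (∃ u : ℤ, c < u ∧ z u = t) ↔ c < z t := by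
    intro c t
    constructor
    · rintro ⟨u, hu, rfl⟩; rwa [hzz]
    · intro h; exact ⟨z t, h, hzz t⟩
  have hinj : Function.Injective z := z.injective
  unfold VisDes
  rcases lt_trichotomy (z (i+1)) i with hbi | hbi | hbi
  · -- z (i+1) < i
    have ha1 : z i ≠ i + 1 := by
      intro h
      have h' : z (i+1) = i := by rw [← h, hzz]
      omega
    rcases lt_trichotomy (z i) i with hai | hai | hai
    · -- z i < i
      have hC1 : Imap z (i+1) = z (i+1) :=
        hCpos _ ⟨i, by omega, by omega, hai⟩
      rcases lt_trichotomy (z (i+1)) (z i) with hba | hba | hba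
      · refine iff_of_true ?_ (Or.inl ⟨hba, hai⟩)
        rcases hval i with h | h <;> rw [hC1, h] <;> omega
      · exact absurd (hinj hba) (by omega)
      · -- z i < z (i+1) < i
        have key : (¬ ∃ t : ℤ, min i (z i) < t ∧ t < max i (z i) ∧ z t < t) ↔
            (∀ t : ℤ, z i < t → t < i → i < z t) := by
          constructor
          · intro hnC t h1 h2
            by_contra h3
            push_neg at h3
            have h4 : z t ≠ t := hne t
            have h5 : ¬ (z t < t) := fun hh => hnC ⟨t, by omega, by omega, hh⟩
            have h6 : t < z t := by omega
            have h7 : z t ≠ i := by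
              intro h
              have h' : z i = t := by rw [← h, hzz]
              omega
            exact hnC ⟨z t, by omega, by omega, by rw [hzz]; omega⟩
          · rintro hall ⟨t, h1, h2, h3⟩
            have h1' : z i < t := by omega
            have h2' : t < i := by omega
            have := hall t h1' h2'
            omega
        constructor
        · intro hL
          have hnC : ¬ ∃ t : ℤ, min i (z i) < t ∧ t < max i (z i) ∧ z t < t := by
            intro hC
            rw [hC1, hCpos i hC] at hL
            omega
          refine Or.inr (Or.inl ⟨hba, hbi, fun t h1 h2 => ?_⟩)
          rw [hex]
          exact key.mp hnC t h1 h2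
        · rintro (⟨h1, h2⟩ | ⟨h1, h2, h3⟩ | ⟨h1, h2, h3⟩)
          · omega
          · have hnC := key.mpr (fun t ht1 ht2 => (hex i t).mp (h3 t ht1 ht2))
            rw [hC1, hCneg i hnC]
            omega
          · omega
    · exact absurd hai (hne i)
    · -- i < z i
      have ha2 : i + 1 < z i := by omega
      have hCi : Imap z i = z i := hCpos _ ⟨i+1, by omega, by omega, by omega⟩
      constructor
      · intro hL
        refine Or.inr (Or.inr ⟨hbi, hai, ?_⟩)
        have hC1 : ∃ t : ℤ, min (i+1) (z (i+1)) < t ∧ t < max (i+1) (z (i+1)) ∧ z t < t := by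
          by_contra h
          rw [hCneg _ h, hCi] at hL
          omega
        obtain ⟨t, h1, h2, h3⟩ := hC1
        intro hall
        have h1' : z (i+1) < t := by omega
        have h2' : t < i + 1 := by omega
        have := (hex (i+1) t).mp (hall t h1' h2')
        omega
      · rintro (⟨h1, h2⟩ | ⟨h1, h2, h3⟩ | ⟨h1, h2, h3⟩)
        · omega
        · omega
        · push_neg at h3
          obtain ⟨t, h1', h2', h3'⟩ := h3
          have hzt : z t ≤ i + 1 := by
            by_contra hgt
            push_neg at hgt
            exact h3' (z t) hgt (hzz t)
          have hzt' : z t ≠ i + 1 := by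
            intro h
            have h' : z (i+1) = t := by rw [← h, hzz]
            omega
          have hne_t := hne t
          have hC1 : Imap z (i+1) = z (i+1) := by
            rcases lt_trichotomy (z t) t with hh | hh | hh
            · exact hCpos _ ⟨t, by omega, by omega, hh⟩
            · omega
            · exact hCpos _ ⟨z t, by omega, by omega, by rw [hzz]; omega⟩
          rw [hC1, hCi]
          omega
  · -- z (i+1) = i
    have hzi : z i = i + 1 := by
      have h := hzz (i+1)
      rw [hbi] at h
      exact h
    have hC1 : Imap z (i+1) = i + 1 := by
      apply hCneg
      rintro ⟨t, h1, h2, -⟩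
      rw [hbi] at h1 h2
      omega
    refine iff_of_false ?_ ?_
    · rw [hC1]
      have : min i (Imap z i) ≤ i := min_le_left _ _
      omega
    · rintro (⟨h1, h2⟩ | ⟨h1, h2, -⟩ | ⟨h1, h2, -⟩) <;> omega
  · -- i < z (i+1)
    refine iff_of_false ?_ ?_
    · have hb1 := hne (i+1)
      have hmin : min i (Imap z i) ≤ i := min_le_left _ _
      rcases hval (i+1) with h | h <;> rw [h] <;> omega
    · rintro (⟨h1, h2⟩ | ⟨h1, h2, -⟩ | ⟨h1, h2, -⟩) <;> omega
end
end
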